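/- arXiv:1306.6303 — 13 statements merged into one kernel-verified Lean document; each statement's English description precedes it below -/
import Mathlib

section
/- For all complex parameter values and all nonzero complex numbers z1, z2 with Λ(z1,z2) ≠ 0 and Λ(z2,z1) ≠ 0, the scattering amplitude S and decay coefficient N satisfy the adjacent-excitation relation: z2·(X11 − q·z1 − p·z2^{-1}) + S(z1,z2)·z1·(X11 − q·z2 − p·z1^{-1}) + 2·N(z1,z2)·(s2·z1·z2 + s1) = 0. -/
/-! Once `z⁻¹` is cleared, `z2·(X11 - q·z1 - p·z2⁻¹)` is the last factor `X11·z2 - q·z1·z2 - p` of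
`Λ(z1,z2)`, and multiplying the relation by `Λ(z2,z1)` leaves a polynomial identity. -/

noncomputable section

/-- The amplitude `Λ(z1, z2)` of the coordinate Bethe ansatz. -/
def Lam (p q t1 t2 s1 s2 tp sp X11 Y z1 z2 : ℂ) : ℂ :=
  z2 * (s1 + s2 * z1 * z2) * (t2 + t1 * z1 * z2) -
    (Y * z1 * z2 - q * z1 * z2 * (z1 + z2) - p * (z1 + z2) + sp * z1 ^ 2 * z2 ^ 2 + tp) *
      (X11 * z2 - q * z1 * z2 - p)

/-- The scattering amplitude `S(z1, z2) = -Λ(z1,z2)/Λ(z2,z1)`. -/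
def Sc (p q t1 t2 s1 s2 tp sp X11 Y z1 z2 : ℂ) : ℂ :=
  -(Lam p q t1 t2 s1 s2 tp sp X11 Y z1 z2 / Lam p q t1 t2 s1 s2 tp sp X11 Y z2 z1)

/-- The decay coefficient `N(z1, z2)`. -/
def Nc (p q t1 t2 s1 s2 tp sp X11 Y z1 z2 : ℂ) : ℂ :=
  (z1 - z2) * (p + q * z1 * z2) * (t2 + t1 * z1 * z2) /
    (2 * Lam p q t1 t2 s1 s2 tp sp X11 Y z2 z1)

/-- The bracket multiplying `X11·z2 - q·z1·z2 - p` in `Λ(z1,z2)` is symmetric in `z1, z2`, so those terms cancel. -/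
theorem mul_lam_swap_sub_lam_mul (p q t1 t2 s1 s2 tp sp X11 Y z1 z2 : ℂ) :
    (X11 * z2 - q * z1 * z2 - p) * Lam p q t1 t2 s1 s2 tp sp X11 Y z2 z1 -
        Lam p q t1 t2 s1 s2 tp sp X11 Y z1 z2 * (X11 * z1 - q * z1 * z2 - p) =
      -((z1 - z2) * (p + q * z1 * z2) * (t2 + t1 * z1 * z2) * (s2 * z1 * z2 + s1)) := by
  unfold Lam
  ring

theorem statement5_general (p q t1 t2 s1 s2 tp sp X11 Y z1 z2 : ℂ)
    (hz1 : z1 ≠ 0) (hz2 : z2 ≠ 0)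
    (h21 : Lam p q t1 t2 s1 s2 tp sp X11 Y z2 z1 ≠ 0) :
    z2 * (X11 - q * z1 - p * z2⁻¹) +
        Sc p q t1 t2 s1 s2 tp sp X11 Y z1 z2 * z1 * (X11 - q * z2 - p * z1⁻¹) +
        2 * Nc p q t1 t2 s1 s2 tp sp X11 Y z1 z2 * (s2 * z1 * z2 + s1) = 0 := by
  rw [Sc, Nc]
  field_simp
  linear_combination mul_lam_swap_sub_lam_mul p q t1 t2 s1 s2 tp sp X11 Y z1 z2

/-- The adjacent-excitation relation satisfied by `S` and `N`. -/
theorem statement5 (p q t1 t2 s1 s2 tp sp X11 Y z1 z2 : ℂ)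
    (hz1 : z1 ≠ 0) (hz2 : z2 ≠ 0)
    (h12 : Lam p q t1 t2 s1 s2 tp sp X11 Y z1 z2 ≠ 0)
    (h21 : Lam p q t1 t2 s1 s2 tp sp X11 Y z2 z1 ≠ 0) :
    z2 * (X11 - q * z1 - p * z2⁻¹) +
        Sc p q t1 t2 s1 s2 tp sp X11 Y z1 z2 * z1 * (X11 - q * z2 - p * z1⁻¹) +
        2 * Nc p q t1 t2 s1 s2 tp sp X11 Y z1 z2 * (s2 * z1 * z2 + s1) = 0 :=
  statement5_general p q t1 t2 s1 s2 tp sp X11 Y z1 z2 hz1 hz2 h21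
end
end

section
/- For all complex parameter values and all nonzero complex numbers z1, z2 with Λ(z1,z2) ≠ 0 and Λ(z2,z1) ≠ 0, the scattering amplitude S and decay coefficient N satisfy the coincident-excitation relation: 2·N(z1,z2)·( Y − q·(z1+z2) − p·(z1^{-1}+z2^{-1}) + sp·z1·z2 + tp·z1^{-1}·z2^{-1} ) + (t1·z2 + t2·z1^{-1}) + S(z1,z2)·(t1·z1 + t2·z2^{-1}) = 0. -/
noncomputable section

/-! The polynomial `P` that multiplies `X11 * z2 - q * z1 * z2 - p` in `Λ(z1, z2)` is symmetric and equals
`z1 z2` times the coincident term of the relation. Since the first summand of `z1 Λ(z1, z2)` is symmetric too,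
`z1 Λ(z1, z2) - z2 Λ(z2, z1) = (z1 - z2)(p + q z1 z2) P(z1, z2)`. Clearing the denominator `Λ(z2, z1)` and
using `t1 z2 + t2 / z1 = (t2 + t1 z1 z2) / z1` (and its swap), the relation is `(t2 + t1 z1 z2)` times this
identity. -/

def coincidentPoly (p q tp sp Y z1 z2 : ℂ) : ℂ :=
  Y * z1 * z2 - q * z1 * z2 * (z1 + z2) - p * (z1 + z2) + sp * z1 ^ 2 * z2 ^ 2 + tp

theorem mul_Lam_sub_mul_Lam_swap (p q t1 t2 s1 s2 tp sp X11 Y z1 z2 : ℂ) :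
    z1 * Lam p q t1 t2 s1 s2 tp sp X11 Y z1 z2 - z2 * Lam p q t1 t2 s1 s2 tp sp X11 Y z2 z1 =
      (z1 - z2) * (p + q * z1 * z2) * coincidentPoly p q tp sp Y z1 z2 := by
  unfold Lam coincidentPoly
  ring

theorem coincidentPoly_eq_mul {z1 z2 : ℂ} (hz1 : z1 ≠ 0) (hz2 : z2 ≠ 0) (p q tp sp Y : ℂ) :
    coincidentPoly p q tp sp Y z1 z2 =
      z1 * z2 * (Y - q * (z1 + z2) - p * (z1⁻¹ + z2⁻¹) + sp * z1 * z2 + tp * z1⁻¹ * z2⁻¹) := by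
  unfold coincidentPoly
  field_simp
  ring

theorem statement6_general (p q t1 t2 s1 s2 tp sp X11 Y z1 z2 : ℂ)
    (hz1 : z1 ≠ 0) (hz2 : z2 ≠ 0)
    (h21 : Lam p q t1 t2 s1 s2 tp sp X11 Y z2 z1 ≠ 0) :
    2 * Nc p q t1 t2 s1 s2 tp sp X11 Y z1 z2 *
        (Y - q * (z1 + z2) - p * (z1⁻¹ + z2⁻¹) + sp * z1 * z2 + tp * z1⁻¹ * z2⁻¹) +
      (t1 * z2 + t2 * z1⁻¹) +
      Sc p q t1 t2 s1 s2 tp sp X11 Y z1 z2 * (t1 * z1 + t2 * z2⁻¹) = 0 := by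
  have hswap := mul_Lam_sub_mul_Lam_swap p q t1 t2 s1 s2 tp sp X11 Y z1 z2
  rw [coincidentPoly_eq_mul hz1 hz2] at hswap
  rw [Nc, Sc]
  generalize Lam p q t1 t2 s1 s2 tp sp X11 Y z1 z2 = L12, Lam p q t1 t2 s1 s2 tp sp X11 Y z2 z1 = L21,
    Y - q * (z1 + z2) - p * (z1⁻¹ + z2⁻¹) + sp * z1 * z2 + tp * z1⁻¹ * z2⁻¹ = E at *
  field_simp
  linear_combination -(t2 + t1 * z1 * z2) * hswap

/-- The coincident-excitation relation satisfied by `S` and `N`. -/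
theorem statement6 (p q t1 t2 s1 s2 tp sp X11 Y z1 z2 : ℂ)
    (hz1 : z1 ≠ 0) (hz2 : z2 ≠ 0)
    (h12 : Lam p q t1 t2 s1 s2 tp sp X11 Y z1 z2 ≠ 0)
    (h21 : Lam p q t1 t2 s1 s2 tp sp X11 Y z2 z1 ≠ 0) :
    2 * Nc p q t1 t2 s1 s2 tp sp X11 Y z1 z2 *
        (Y - q * (z1 + z2) - p * (z1⁻¹ + z2⁻¹) + sp * z1 * z2 + tp * z1⁻¹ * z2⁻¹) +
      (t1 * z2 + t2 * z1⁻¹) +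
      Sc p q t1 t2 s1 s2 tp sp X11 Y z1 z2 * (t1 * z1 + t2 * z2⁻¹) = 0 :=
  statement6_general p q t1 t2 s1 s2 tp sp X11 Y z1 z2 hz1 hz2 h21
end
end

section
/- For the generalized Zamolodchikov–Fateev (gZF) parameter family, the amplitude Λ factorizes: for all complex z1, z2, τ2·τp·Λ(z1,z2) = (p + q·z1z2)·(t2 + t1·z1z2)·( z1z2 − τp·(z1+z2−σ·z2) + τp² ). Consequently, wherever the denominators are nonzero, S(z1,z2) = −( z1z2 − τp·(z1+z2−σ·z2) + τp² )/( z1z2 − τp·(z1+z2−σ·z1) + τp² ) and N(z1,z2) = τ2·τp·(z1−z2)/( 2·( z1z2 − τp·(z1+z2−σ·z1) + τp² ) ). -/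
noncomputable section

/-! On the gZF locus, with `τp = tp / p`, every parameter is `p`, `t2` or `s1` times a power of
`1 / τp`. Hence `p + q z1z2` and `t2 + t1 z1z2` are multiples of `1 + z1z2/τp²`, and the factor
`Y z1z2 − q z1z2 (z1+z2) − p (z1+z2) + sp z1²z2² + tp` of `Λ` equals
`p τp (1 + z1z2/τp²)² − p (z1+z2)(1 + z1z2/τp²)`. So
`Λ(z1,z2) = (p²/τp)(1 + z1z2/τp²)² · (z1z2 − τp(z1+z2−σz2) + τp²)`, and the prefactor depends only
on `z1z2`: it cancels in `S`, and against `(p + q z1z2)(t2 + t1 z1z2) = τ2 τp · (prefactor)` in `N`. -/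

def gZFPrefactor (p τ w : ℂ) : ℂ :=
  p ^ 2 / τ * (1 + w / τ ^ 2) ^ 2

theorem Lam_gZF_eq (p τ t2 s1 σ z1 z2 : ℂ) (hτ : τ ≠ 0) (hσ : p ^ 2 * σ = s1 * t2) :
    Lam p (p / τ ^ 2) (t2 / τ ^ 2) t2 s1 (s1 / τ ^ 2) (p * τ) (p / τ ^ 3) 0 (2 * p / τ) z1 z2 =
      gZFPrefactor p τ (z1 * z2) * (z1 * z2 - τ * (z1 + z2 - σ * z2) + τ ^ 2) := by
  unfold Lam gZFPrefactor
  field_simp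
  linear_combination (-τ * z2 * (τ ^ 2 + z1 * z2) ^ 2) * hσ

theorem gZF_couplings_mul_eq (p τ t2 z1 z2 : ℂ) (hp : p ≠ 0) (hτ : τ ≠ 0) :
    (p + p / τ ^ 2 * z1 * z2) * (t2 + t2 / τ ^ 2 * z1 * z2) =
      t2 / p * τ * gZFPrefactor p τ (z1 * z2) := by
  unfold gZFPrefactor
  field_simp

theorem statement7_general (p tp t2 s1 : ℂ)
    (hp : p ≠ 0) (htp : tp ≠ 0)
    (q t1 s2 sp X11 Y τp τ2 σ : ℂ)
    (hq : q = p ^ 3 / tp ^ 2) (ht1 : t1 = p ^ 2 * t2 / tp ^ 2)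
    (hs2 : s2 = p ^ 2 * s1 / tp ^ 2) (hsp : sp = p ^ 4 / tp ^ 3)
    (hX11 : X11 = 0) (hY : Y = 2 * p ^ 2 / tp)
    (hτp : τp = tp / p) (hτ2 : τ2 = t2 / p) (hσ : σ = s1 * t2 / p ^ 2) :
    (∀ z1 z2 : ℂ,
      τ2 * τp * Lam p q t1 t2 s1 s2 tp sp X11 Y z1 z2 =
        (p + q * z1 * z2) * (t2 + t1 * z1 * z2) *
          (z1 * z2 - τp * (z1 + z2 - σ * z2) + τp ^ 2)) ∧
    ∀ z1 z2 : ℂ, Lam p q t1 t2 s1 s2 tp sp X11 Y z2 z1 ≠ 0 →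
      Sc p q t1 t2 s1 s2 tp sp X11 Y z1 z2 =
          -((z1 * z2 - τp * (z1 + z2 - σ * z2) + τp ^ 2) /
            (z1 * z2 - τp * (z1 + z2 - σ * z1) + τp ^ 2)) ∧
      Nc p q t1 t2 s1 s2 tp sp X11 Y z1 z2 =
          τ2 * τp * (z1 - z2) /
            (2 * (z1 * z2 - τp * (z1 + z2 - σ * z1) + τp ^ 2)) := by
  obtain rfl : tp = p * τp := by rw [hτp, mul_div_cancel₀ tp hp]
  have hτp0 : τp ≠ 0 := right_ne_zero_of_mul htp
  obtain rfl : q = p / τp ^ 2 := by rw [hq]; field_simp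
  obtain rfl : t1 = t2 / τp ^ 2 := by rw [ht1]; field_simp
  obtain rfl : s2 = s1 / τp ^ 2 := by rw [hs2]; field_simp
  obtain rfl : sp = p / τp ^ 3 := by rw [hsp]; field_simp
  obtain rfl : Y = 2 * p / τp := by rw [hY]; field_simp
  subst hX11 hτ2
  have hLam z1 z2 := Lam_gZF_eq p τp t2 s1 σ z1 z2 hτp0 (by rw [hσ]; field_simp)
  have hPT z1 z2 := gZF_couplings_mul_eq p τp t2 z1 z2 hp hτp0
  refine ⟨fun z1 z2 => by rw [hLam, hPT]; ring, fun z1 z2 h21 => ?_⟩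
  have hLam21 := hLam z2 z1
  rw [mul_comm z2 z1, add_comm z2 z1] at hLam21
  have hprefactor := left_ne_zero_of_mul (hLam21 ▸ h21)
  constructor
  · rw [Sc, hLam, hLam21, mul_div_mul_left _ _ hprefactor]
  · rw [Nc, mul_assoc (z1 - z2), hPT, hLam21]
    field_simp

/-- Factorization of `Λ` and the resulting `S` and `N` for the generalized
Zamolodchikov–Fateev model. -/
theorem statement7 (p tp t2 s1 : ℂ)
    (hp : p ≠ 0) (htp : tp ≠ 0) (ht2 : t2 ≠ 0) (hs1 : s1 ≠ 0)
    (q t1 s2 sp X11 Y τp τ2 σ : ℂ)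
    (hq : q = p ^ 3 / tp ^ 2) (ht1 : t1 = p ^ 2 * t2 / tp ^ 2)
    (hs2 : s2 = p ^ 2 * s1 / tp ^ 2) (hsp : sp = p ^ 4 / tp ^ 3)
    (hX11 : X11 = 0) (hY : Y = 2 * p ^ 2 / tp)
    (hτp : τp = tp / p) (hτ2 : τ2 = t2 / p) (hσ : σ = s1 * t2 / p ^ 2) :
    (∀ z1 z2 : ℂ,
      τ2 * τp * Lam p q t1 t2 s1 s2 tp sp X11 Y z1 z2 =
        (p + q * z1 * z2) * (t2 + t1 * z1 * z2) *
          (z1 * z2 - τp * (z1 + z2 - σ * z2) + τp ^ 2)) ∧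
    ∀ z1 z2 : ℂ, Lam p q t1 t2 s1 s2 tp sp X11 Y z2 z1 ≠ 0 →
      Sc p q t1 t2 s1 s2 tp sp X11 Y z1 z2 =
          -((z1 * z2 - τp * (z1 + z2 - σ * z2) + τp ^ 2) /
            (z1 * z2 - τp * (z1 + z2 - σ * z1) + τp ^ 2)) ∧
      Nc p q t1 t2 s1 s2 tp sp X11 Y z1 z2 =
          τ2 * τp * (z1 - z2) /
            (2 * (z1 * z2 - τp * (z1 + z2 - σ * z1) + τp ^ 2)) :=
  statement7_general p tp t2 s1 hp htp q t1 s2 sp X11 Y τp τ2 σ hq ht1 hs2 hsp hX11 hY hτp hτ2 hσ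
end
end

section
/- For the generalized Izergin–Korepin (gIK) parameter family, the amplitude Λ satisfies the factorization: for all complex z1, z2, τ2·τp·( u^{-1}·z1z2 + τp² )·Λ(z1,z2) = (p + q·z1z2)·(t2 + t1·z1z2)·( v²·z1z2 − τp·(z1 + v·z2) + τp² )·( v²·z1z2 − τp·(1+v)·z2 + τp² ). Consequently, wherever the denominators are nonzero, S(z1,z2) = −( v²·z1z2 − τp·(z1+v·z2) + τp² )·( v²·z1z2 − τp·(1+v)·z2 + τp² ) / ( ( v²·z1z2 − τp·(z2+v·z1) + τp² )·( v²·z1z2 − τp·(1+v)·z1 + τp² ) ) and N(z1,z2) = τ2·τp·(z1−z2)·( u^{-1}·z1z2 + τp² ) / ( 2·( v²·z1z2 − τp·(z2+v·z1) + τp² )·( v²·z1z2 − τp·(1+v)·z1 + τp² ) ). -/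
/-!
Every coupling of the gIK family is `p` times a rational function of `τp, τ2, v, u`, so after
clearing denominators, `τp³ Λ(z1, z2) = p (p + q z1 z2) A(z1, z2) B(z1, z2)`, with `A, B` the two
quadratic factors, becomes a polynomial identity. It holds modulo the quadratic equation for `u`,
in the form `u⁻¹ + v⁴ u = v² - 2 v - 1` (note `1 / u' = v⁴ u`). As
`τp² (t2 + t1 z1 z2) = p τ2 (u⁻¹ z1 z2 + τp²)`, this is the stated factorization, and since the
prefactor `p (p + q z1 z2)` is symmetric in `z1, z2`, it cancels from `S` and from `N`.
-/

noncomputable section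

theorem div_eq_div_of_mul_eq_mul {K : Type*} [Field K] {c k a b a' b' : K} (hc : c ≠ 0)
    (ha : c * a = k * a') (hb : c * b = k * b') (hb0 : b ≠ 0) : a / b = a' / b' := by
  have hk : k ≠ 0 := by
    rintro rfl
    exact hb0 (by simpa [hc] using hb)
  rw [← mul_div_mul_left a b hc, ha, hb, mul_div_mul_left _ _ hk]

section

variable {p q t1 t2 s1 s2 tp sp X11 Y v u u' τp τ2 : ℂ}

theorem gIK_cube_mul_Lam (hp : p ≠ 0) (htp : tp ≠ 0) (ht2 : t2 ≠ 0)
    (hu : v ^ 4 * u ^ 2 + (1 + 2 * v - v ^ 2) * u + 1 = 0) (huu' : u * u' = (v ^ 4)⁻¹)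
    (hsp : sp = v ^ 4 * p ^ 4 / tp ^ 3) (hq : q = v ^ 2 * p ^ 3 / tp ^ 2)
    (ht1 : t1 = p ^ 2 * t2 / (u * tp ^ 2))
    (hs1 : s1 = v * (v - 1) * p ^ 2 / t2)
    (hs2 : s2 = v * (v - 1) * p ^ 4 / (u' * t2 * tp ^ 2))
    (hX11 : X11 = v * (v + 1) * p ^ 2 / tp) (hY : Y = (v ^ 2 + 1) * p ^ 2 / tp)
    (hτp : τp = tp / p) (z1 z2 : ℂ) :
    τp ^ 3 * Lam p q t1 t2 s1 s2 tp sp X11 Y z1 z2 =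
      p * (p + q * z1 * z2) * (v ^ 2 * z1 * z2 - τp * (z1 + v * z2) + τp ^ 2) *
        (v ^ 2 * z1 * z2 - τp * (1 + v) * z2 + τp ^ 2) := by
  have hu0 : u ≠ 0 := by rintro rfl; simp at hu
  have hu' : u' = (v ^ 4 * u)⁻¹ := by
    rw [mul_inv, ← huu']
    field_simp
  subst hsp hq ht1 hs1 hu' hs2 hX11 hY hτp
  unfold Lam
  field_simp
  -- `u⁻¹ + v⁴ u` appears only in the `z1 z2²` term of `z2 (s1 + s2 z1 z2) (t2 + t1 z1 z2)`
  linear_combination p ^ 3 * tp ^ 3 * v * (v - 1) * z1 * z2 ^ 2 * hu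

theorem gIK_sq_mul_t2_add_t1_mul (hp : p ≠ 0) (htp : tp ≠ 0)
    (ht1 : t1 = p ^ 2 * t2 / (u * tp ^ 2)) (hτp : τp = tp / p) (hτ2 : τ2 = t2 / p) (w : ℂ) :
    τp ^ 2 * (t2 + t1 * w) = p * τ2 * (u⁻¹ * w + τp ^ 2) := by
  subst ht1 hτp hτ2
  field_simp
  ring

theorem Lam_factorization_of_cube_mul_Lam (hτp : τp ≠ 0)
    (hcube : ∀ z1 z2 : ℂ, τp ^ 3 * Lam p q t1 t2 s1 s2 tp sp X11 Y z1 z2 =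
      p * (p + q * z1 * z2) * (v ^ 2 * z1 * z2 - τp * (z1 + v * z2) + τp ^ 2) *
        (v ^ 2 * z1 * z2 - τp * (1 + v) * z2 + τp ^ 2))
    (ht : ∀ w : ℂ, τp ^ 2 * (t2 + t1 * w) = p * τ2 * (u⁻¹ * w + τp ^ 2)) (z1 z2 : ℂ) :
    τ2 * τp * (u⁻¹ * z1 * z2 + τp ^ 2) * Lam p q t1 t2 s1 s2 tp sp X11 Y z1 z2 =
      (p + q * z1 * z2) * (t2 + t1 * z1 * z2) *
        (v ^ 2 * z1 * z2 - τp * (z1 + v * z2) + τp ^ 2) *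
        (v ^ 2 * z1 * z2 - τp * (1 + v) * z2 + τp ^ 2) := by
  apply mul_left_cancel₀ (pow_ne_zero 3 hτp)
  linear_combination τ2 * τp * (u⁻¹ * z1 * z2 + τp ^ 2) * hcube z1 z2 -
    (p + q * z1 * z2) * (v ^ 2 * z1 * z2 - τp * (z1 + v * z2) + τp ^ 2) *
      (v ^ 2 * z1 * z2 - τp * (1 + v) * z2 + τp ^ 2) * τp * ht (z1 * z2)

end

theorem statement10_general (p tp t2 v u u' : ℂ)
    (hp : p ≠ 0) (htp : tp ≠ 0) (ht2 : t2 ≠ 0)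
    (hu : v ^ 4 * u ^ 2 + (1 + 2 * v - v ^ 2) * u + 1 = 0)
    (huu' : u * u' = (v ^ 4)⁻¹)
    (q t1 s1 s2 sp X11 Y τp τ2 : ℂ)
    (hsp : sp = v ^ 4 * p ^ 4 / tp ^ 3) (hq : q = v ^ 2 * p ^ 3 / tp ^ 2)
    (ht1 : t1 = p ^ 2 * t2 / (u * tp ^ 2))
    (hs1 : s1 = v * (v - 1) * p ^ 2 / t2)
    (hs2 : s2 = v * (v - 1) * p ^ 4 / (u' * t2 * tp ^ 2))
    (hX11 : X11 = v * (v + 1) * p ^ 2 / tp) (hY : Y = (v ^ 2 + 1) * p ^ 2 / tp)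
    (hτp : τp = tp / p) (hτ2 : τ2 = t2 / p) :
    (∀ z1 z2 : ℂ,
      τ2 * τp * (u⁻¹ * z1 * z2 + τp ^ 2) * Lam p q t1 t2 s1 s2 tp sp X11 Y z1 z2 =
        (p + q * z1 * z2) * (t2 + t1 * z1 * z2) *
          (v ^ 2 * z1 * z2 - τp * (z1 + v * z2) + τp ^ 2) *
          (v ^ 2 * z1 * z2 - τp * (1 + v) * z2 + τp ^ 2)) ∧
    ∀ z1 z2 : ℂ, Lam p q t1 t2 s1 s2 tp sp X11 Y z2 z1 ≠ 0 →
      (v ^ 2 * z1 * z2 - τp * (z2 + v * z1) + τp ^ 2) ≠ 0 →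
      (v ^ 2 * z1 * z2 - τp * (1 + v) * z1 + τp ^ 2) ≠ 0 →
      Sc p q t1 t2 s1 s2 tp sp X11 Y z1 z2 =
          -((v ^ 2 * z1 * z2 - τp * (z1 + v * z2) + τp ^ 2) *
              (v ^ 2 * z1 * z2 - τp * (1 + v) * z2 + τp ^ 2) /
            ((v ^ 2 * z1 * z2 - τp * (z2 + v * z1) + τp ^ 2) *
              (v ^ 2 * z1 * z2 - τp * (1 + v) * z1 + τp ^ 2))) ∧
      Nc p q t1 t2 s1 s2 tp sp X11 Y z1 z2 =
          τ2 * τp * (z1 - z2) * (u⁻¹ * z1 * z2 + τp ^ 2) /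
            (2 * (v ^ 2 * z1 * z2 - τp * (z2 + v * z1) + τp ^ 2) *
              (v ^ 2 * z1 * z2 - τp * (1 + v) * z1 + τp ^ 2)) := by
  have hτp0 : τp ≠ 0 := hτp ▸ div_ne_zero htp hp
  have hcube := gIK_cube_mul_Lam hp htp ht2 hu huu' hsp hq ht1 hs1 hs2 hX11 hY hτp
  have hfac := Lam_factorization_of_cube_mul_Lam hτp0 hcube
    (gIK_sq_mul_t2_add_t1_mul hp htp ht1 hτp hτ2)
  refine ⟨hfac, fun z1 z2 hΛ hA hB => ⟨?_, ?_⟩⟩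
  · rw [Sc, neg_inj]
    exact div_eq_div_of_mul_eq_mul (k := p * (p + q * z1 * z2)) (pow_ne_zero 3 hτp0)
      (by rw [hcube]; ring) (by rw [hcube]; ring) hΛ
  · rw [Nc, div_eq_div_iff (mul_ne_zero two_ne_zero hΛ)
      (mul_ne_zero (mul_ne_zero two_ne_zero hA) hB)]
    linear_combination -2 * (z1 - z2) * hfac z2 z1

/-- Factorization of `Λ` and the resulting `S` and `N` for the generalized
Izergin–Korepin model. -/
theorem statement10 (p tp t2 v u u' : ℂ)
    (hp : p ≠ 0) (htp : tp ≠ 0) (ht2 : t2 ≠ 0)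
    (hu : v ^ 4 * u ^ 2 + (1 + 2 * v - v ^ 2) * u + 1 = 0)
    (hu' : v ^ 4 * u' ^ 2 + (1 + 2 * v - v ^ 2) * u' + 1 = 0)
    (huu' : u * u' = (v ^ 4)⁻¹)
    (q t1 s1 s2 sp X11 Y τp τ2 : ℂ)
    (hsp : sp = v ^ 4 * p ^ 4 / tp ^ 3) (hq : q = v ^ 2 * p ^ 3 / tp ^ 2)
    (ht1 : t1 = p ^ 2 * t2 / (u * tp ^ 2))
    (hs1 : s1 = v * (v - 1) * p ^ 2 / t2)
    (hs2 : s2 = v * (v - 1) * p ^ 4 / (u' * t2 * tp ^ 2))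
    (hX11 : X11 = v * (v + 1) * p ^ 2 / tp) (hY : Y = (v ^ 2 + 1) * p ^ 2 / tp)
    (hτp : τp = tp / p) (hτ2 : τ2 = t2 / p) :
    (∀ z1 z2 : ℂ,
      τ2 * τp * (u⁻¹ * z1 * z2 + τp ^ 2) * Lam p q t1 t2 s1 s2 tp sp X11 Y z1 z2 =
        (p + q * z1 * z2) * (t2 + t1 * z1 * z2) *
          (v ^ 2 * z1 * z2 - τp * (z1 + v * z2) + τp ^ 2) *
          (v ^ 2 * z1 * z2 - τp * (1 + v) * z2 + τp ^ 2)) ∧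
    ∀ z1 z2 : ℂ, Lam p q t1 t2 s1 s2 tp sp X11 Y z2 z1 ≠ 0 →
      (v ^ 2 * z1 * z2 - τp * (z2 + v * z1) + τp ^ 2) ≠ 0 →
      (v ^ 2 * z1 * z2 - τp * (1 + v) * z1 + τp ^ 2) ≠ 0 →
      Sc p q t1 t2 s1 s2 tp sp X11 Y z1 z2 =
          -((v ^ 2 * z1 * z2 - τp * (z1 + v * z2) + τp ^ 2) *
              (v ^ 2 * z1 * z2 - τp * (1 + v) * z2 + τp ^ 2) /
            ((v ^ 2 * z1 * z2 - τp * (z2 + v * z1) + τp ^ 2) *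
              (v ^ 2 * z1 * z2 - τp * (1 + v) * z1 + τp ^ 2))) ∧
      Nc p q t1 t2 s1 s2 tp sp X11 Y z1 z2 =
          τ2 * τp * (z1 - z2) * (u⁻¹ * z1 * z2 + τp ^ 2) /
            (2 * (v ^ 2 * z1 * z2 - τp * (z2 + v * z1) + τp ^ 2) *
              (v ^ 2 * z1 * z2 - τp * (1 + v) * z1 + τp ^ 2)) :=
  statement10_general p tp t2 v u u' hp htp ht2 hu huu' q t1 s1 s2 sp X11 Y τp τ2 hsp hq ht1 hs1 hs2
    hX11 hY hτp hτ2
end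
end

section
/- For the generalized Bariev (gB) parameter family, the amplitude Λ satisfies the factorization: for all complex z1, z2, τp·μ²·Λ(z1,z2) = p²·(1 + θ·z1z2)·Λ̃(z1,z2), where Λ̃(z1,z2) = J·μ⁴·τp²·z1²z2² − μ²·τp·θ·z1z2·(z1+z2) − J²·μ³·τp·z1·z2² + (μ−θ)·(μ−J²·θ)·z1z2 + J²·μ³·τp²·z2² − μ²·τp·(z1+z2) − J·μ·τp·θ·z2 + μ²·τp². Consequently, wherever the denominators are nonzero, S(z1,z2) = −Λ̃(z1,z2)/Λ̃(z2,z1) and N(z1,z2) = τ2·τp·μ²·(z1−z2)·(1+μ·z1z2)/(2·Λ̃(z2,z1)). -/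
/-!
Substituting `q = θ p`, `t₁ = μ t₂`, `t_p = τ_p p` into the gB parameters, `τ_p μ² Λ` becomes `p²`
times a polynomial `lamReduced` in `J, μ, τ_p, θ, z₁, z₂` alone (`t₂` cancels). Modulo
`J² + J + 1` this polynomial is divisible by `1 + θ z₁ z₂`, with cofactor `Λ̃`. Since the factor
`1 + θ z₁ z₂` and the scalar `τ_p μ²` are symmetric in `z₁, z₂`, they cancel in the quotients
defining `S` and `N`.
-/

noncomputable section

/-- The factorized amplitude `Λ̃` of the generalized Bariev model. -/
def LamB (J μ τp θ z1 z2 : ℂ) : ℂ :=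
  J * μ ^ 4 * τp ^ 2 * z1 ^ 2 * z2 ^ 2 - μ ^ 2 * τp * θ * z1 * z2 * (z1 + z2) -
    J ^ 2 * μ ^ 3 * τp * z1 * z2 ^ 2 + (μ - θ) * (μ - J ^ 2 * θ) * z1 * z2 +
    J ^ 2 * μ ^ 3 * τp ^ 2 * z2 ^ 2 - μ ^ 2 * τp * (z1 + z2) - J * μ * τp * θ * z2 +
    μ ^ 2 * τp ^ 2

def lamReduced (J μ τp θ z1 z2 : ℂ) : ℂ :=
  J * τp * μ * (J * μ ^ 2 * τp ^ 2 - θ) * (1 + J * μ * z1 * z2) * (1 + μ * z1 * z2) * z2 -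
    ((μ ^ 2 + J * θ * μ + J ^ 2 * θ ^ 2 - J ^ 2 * μ ^ 3 * τp ^ 2) * z1 * z2 +
        τp * μ ^ 2 * (J * μ ^ 2 * τp * z1 ^ 2 * z2 ^ 2 - θ * z1 * z2 * (z1 + z2) - (z1 + z2) + τp)) *
      (J ^ 2 * μ * τp * z2 - θ * z1 * z2 - 1)

theorem tau_mul_lam_eq_lamReduced {p q t1 t2 tp J s1 s2 sp X11 Y τp θ μ : ℂ}
    (hp : p ≠ 0) (ht1 : t1 ≠ 0) (ht2 : t2 ≠ 0) (htp : tp ≠ 0)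
    (hs1 : s1 = J * (J * t1 ^ 2 * tp ^ 2 - p * q * t2 ^ 2) / (t1 * t2 ^ 2))
    (hs2 : s2 = J ^ 2 * (J * t1 ^ 2 * tp ^ 2 - p * q * t2 ^ 2) / t2 ^ 3)
    (hsp : sp = J * t1 ^ 2 * tp / t2 ^ 2)
    (hX11 : X11 = J ^ 2 * t1 * tp / t2)
    (hY : Y = (p ^ 2 * t1 ^ 2 * t2 + J * p * q * t1 * t2 ^ 2 + J ^ 2 * q ^ 2 * t2 ^ 3 -
        J ^ 2 * t1 ^ 3 * tp ^ 2) / (t1 ^ 2 * t2 * tp))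
    (hτp : τp = tp / p) (hθ : θ = q / p) (hμ : μ = t1 / t2) (z1 z2 : ℂ) :
    τp * μ ^ 2 * Lam p q t1 t2 s1 s2 tp sp X11 Y z1 z2 = p ^ 2 * lamReduced J μ τp θ z1 z2 := by
  subst hs1 hs2 hsp hX11 hY hτp hθ hμ
  unfold Lam lamReduced
  field_simp
  ring

theorem lamReduced_eq_mul_lamB {J : ℂ} (hJ : J ^ 2 + J + 1 = 0) (μ τp θ z1 z2 : ℂ) :
    lamReduced J μ τp θ z1 z2 = (1 + θ * z1 * z2) * LamB J μ τp θ z1 z2 := by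
  unfold lamReduced LamB
  linear_combination
    (μ * θ * z1 * z2 + μ * θ ^ 2 * z1 ^ 2 * z2 ^ 2 + J * μ * τp * θ ^ 2 * z1 * z2 ^ 2 -
      J * μ ^ 2 * τp * θ * z1 * z2 ^ 2 - J ^ 2 * μ * τp * θ ^ 2 * z1 * z2 ^ 2 +
      J ^ 2 * μ ^ 4 * τp ^ 3 * z1 * z2 ^ 2) * hJ

theorem div_eq_div_of_mul_eq_mul_of_mul_eq_mul {K : Type*} [Field K] {c g x x' y y' : K}
    (hc : c ≠ 0) (hx : c * x = g * y) (hx' : c * x' = g * y') (h : x' ≠ 0) :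
    x / x' = y / y' := by
  have hg : g ≠ 0 := left_ne_zero_of_mul (hx' ▸ mul_ne_zero hc h)
  calc x / x' = c * x / (c * x') := (mul_div_mul_left x x' hc).symm
    _ = g * y / (g * y') := by rw [hx, hx']
    _ = y / y' := mul_div_mul_left y y' hg

theorem statement11_general (p q t1 t2 tp J : ℂ)
    (hp : p ≠ 0) (ht1 : t1 ≠ 0) (ht2 : t2 ≠ 0) (htp : tp ≠ 0)
    (hJ : J ^ 2 + J + 1 = 0)
    (s1 s2 sp X11 Y τp τ2 θ μ : ℂ)
    (hs1 : s1 = J * (J * t1 ^ 2 * tp ^ 2 - p * q * t2 ^ 2) / (t1 * t2 ^ 2))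
    (hs2 : s2 = J ^ 2 * (J * t1 ^ 2 * tp ^ 2 - p * q * t2 ^ 2) / t2 ^ 3)
    (hsp : sp = J * t1 ^ 2 * tp / t2 ^ 2)
    (hX11 : X11 = J ^ 2 * t1 * tp / t2)
    (hY : Y = (p ^ 2 * t1 ^ 2 * t2 + J * p * q * t1 * t2 ^ 2 + J ^ 2 * q ^ 2 * t2 ^ 3 -
        J ^ 2 * t1 ^ 3 * tp ^ 2) / (t1 ^ 2 * t2 * tp))
    (hτp : τp = tp / p) (hτ2 : τ2 = t2 / p) (hθ : θ = q / p) (hμ : μ = t1 / t2) :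
    (∀ z1 z2 : ℂ,
      τp * μ ^ 2 * Lam p q t1 t2 s1 s2 tp sp X11 Y z1 z2 =
        p ^ 2 * (1 + θ * z1 * z2) * LamB J μ τp θ z1 z2) ∧
    ∀ z1 z2 : ℂ, Lam p q t1 t2 s1 s2 tp sp X11 Y z2 z1 ≠ 0 →
      Sc p q t1 t2 s1 s2 tp sp X11 Y z1 z2 =
          -(LamB J μ τp θ z1 z2 / LamB J μ τp θ z2 z1) ∧
      Nc p q t1 t2 s1 s2 tp sp X11 Y z1 z2 =
          τ2 * τp * μ ^ 2 * (z1 - z2) * (1 + μ * z1 * z2) /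
            (2 * LamB J μ τp θ z2 z1) := by
  have hfac : ∀ z1 z2 : ℂ, τp * μ ^ 2 * Lam p q t1 t2 s1 s2 tp sp X11 Y z1 z2 =
      p ^ 2 * (1 + θ * z1 * z2) * LamB J μ τp θ z1 z2 := fun z1 z2 => by
    rw [tau_mul_lam_eq_lamReduced hp ht1 ht2 htp hs1 hs2 hsp hX11 hY hτp hθ hμ,
      lamReduced_eq_mul_lamB hJ]
    ring
  have hc : τp * μ ^ 2 ≠ 0 := by
    rw [hτp, hμ]
    exact mul_ne_zero (div_ne_zero htp hp) (pow_ne_zero 2 (div_ne_zero ht1 ht2))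
  have hfac_swap : ∀ z1 z2 : ℂ, τp * μ ^ 2 * Lam p q t1 t2 s1 s2 tp sp X11 Y z2 z1 =
      p ^ 2 * (1 + θ * z1 * z2) * LamB J μ τp θ z2 z1 := fun z1 z2 => by
    rw [hfac z2 z1]; ring
  refine ⟨hfac, fun z1 z2 h => ⟨?_, ?_⟩⟩
  · rw [Sc, div_eq_div_of_mul_eq_mul_of_mul_eq_mul hc (hfac z1 z2) (hfac_swap z1 z2) h]
  · refine div_eq_div_of_mul_eq_mul_of_mul_eq_mul (g := p ^ 2 * (1 + θ * z1 * z2)) hc ?_ ?_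
      (mul_ne_zero two_ne_zero h)
    · rw [hτ2, hθ, hμ]
      field_simp
    · rw [mul_left_comm, hfac_swap z1 z2]
      ring

/-- Factorization of `Λ` and the resulting `S` and `N` for the generalized
Bariev model. -/
theorem statement11 (p q t1 t2 tp J : ℂ)
    (hp : p ≠ 0) (hq : q ≠ 0) (ht1 : t1 ≠ 0) (ht2 : t2 ≠ 0) (htp : tp ≠ 0)
    (hJ : J ^ 2 + J + 1 = 0)
    (s1 s2 sp X11 Y τp τ2 θ μ : ℂ)
    (hs1 : s1 = J * (J * t1 ^ 2 * tp ^ 2 - p * q * t2 ^ 2) / (t1 * t2 ^ 2))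
    (hs2 : s2 = J ^ 2 * (J * t1 ^ 2 * tp ^ 2 - p * q * t2 ^ 2) / t2 ^ 3)
    (hsp : sp = J * t1 ^ 2 * tp / t2 ^ 2)
    (hX11 : X11 = J ^ 2 * t1 * tp / t2)
    (hY : Y = (p ^ 2 * t1 ^ 2 * t2 + J * p * q * t1 * t2 ^ 2 + J ^ 2 * q ^ 2 * t2 ^ 3 -
        J ^ 2 * t1 ^ 3 * tp ^ 2) / (t1 ^ 2 * t2 * tp))
    (hτp : τp = tp / p) (hτ2 : τ2 = t2 / p) (hθ : θ = q / p) (hμ : μ = t1 / t2) :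
    (∀ z1 z2 : ℂ,
      τp * μ ^ 2 * Lam p q t1 t2 s1 s2 tp sp X11 Y z1 z2 =
        p ^ 2 * (1 + θ * z1 * z2) * LamB J μ τp θ z1 z2) ∧
    ∀ z1 z2 : ℂ, Lam p q t1 t2 s1 s2 tp sp X11 Y z2 z1 ≠ 0 →
      Sc p q t1 t2 s1 s2 tp sp X11 Y z1 z2 =
          -(LamB J μ τp θ z1 z2 / LamB J μ τp θ z2 z1) ∧
      Nc p q t1 t2 s1 s2 tp sp X11 Y z1 z2 =
          τ2 * τp * μ ^ 2 * (z1 - z2) * (1 + μ * z1 * z2) /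
            (2 * LamB J μ τp θ z2 z1) :=
  statement11_general p q t1 t2 tp J hp ht1 ht2 htp hJ s1 s2 sp X11 Y τp τ2 θ μ hs1 hs2 hsp hX11 hY
    hτp hτ2 hθ hμ
end
end

section
/- For the SpR parameter family, the amplitude Λ factorizes: for all complex z1, z2, τ2·τp·Λ(z1,z2) = (p + q·z1z2)·(t2 + t1·z1z2)·( (τ3²−τ3+1)·z1z2 − τp·(z1+z2−τ3·z2) + τp² ). Consequently, wherever the denominators are nonzero, S(z1,z2) = −( (τ3²−τ3+1)·z1z2 − τp·(z1+z2−τ3·z2) + τp² )/( (τ3²−τ3+1)·z1z2 − τp·(z1+z2−τ3·z1) + τp² ) and N(z1,z2) = τ2·τp·(z1−z2)/( 2·( (τ3²−τ3+1)·z1z2 − τp·(z1+z2−τ3·z1) + τp² ) ). -/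
noncomputable section

/-! With the SpR values, `s1 + s2 z1 z2`, `t2 + t1 z1 z2` and the first factor of the second
term of `Λ` are all multiples of `p + q z1 z2`, so clearing the denominators of the reduced
parameters factors `Λ`. The prefactor `(p + q z1 z2)(t2 + t1 z1 z2)` is symmetric in `z1, z2`,
hence cancels from the ratio `S` and, against the numerator of `N`, from `N`. -/

theorem div_eq_div_of_mul_eq_mul_s12 {K : Type*} [Field K] {c a l l' d d' : K} (hc : c ≠ 0)
    (h : c * l = a * d) (h' : c * l' = a * d') (hl' : l' ≠ 0) : l / l' = d / d' := by
  have had' : a * d' ≠ 0 := h' ▸ mul_ne_zero hc hl'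
  rw [← mul_div_mul_left l l' hc, h, h', mul_div_mul_left d d' (left_ne_zero_of_mul had')]

theorem mul_div_mul_eq_of_mul_eq_mul {K : Type*} [Field K] {c a l d : K} (x k : K) (hc : c ≠ 0)
    (h : c * l = a * d) (hl : l ≠ 0) : x * a / (k * l) = c * x / (k * d) := by
  have had : a * d ≠ 0 := h ▸ mul_ne_zero hc hl
  rw [← mul_div_mul_left (x * a) (k * l) hc, mul_left_comm c k, h,
    show c * (x * a) = a * (c * x) by ring, show k * (a * d) = a * (k * d) by ring,
    mul_div_mul_left _ _ (left_ne_zero_of_mul had)]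

theorem Lam_spR_factorization {p tp t2 : ℂ} (q t3 z1 z2 : ℂ) (hp : p ≠ 0) (htp : tp ≠ 0)
    (ht2 : t2 ≠ 0) :
    t2 / p * (tp / p) *
        Lam p q (q * t2 / p) t2 (p * t3 / t2) (q * t3 / t2) tp
          (q * (t3 ^ 2 - t3 * p + p ^ 2) / (p * tp)) 0
          ((t3 ^ 2 - t3 * p + p ^ 2) / tp + q * tp / p) z1 z2 =
      (p + q * z1 * z2) * (t2 + q * t2 / p * z1 * z2) *
        (((t3 / p) ^ 2 - t3 / p + 1) * z1 * z2 - tp / p * (z1 + z2 - t3 / p * z2) + (tp / p) ^ 2) := by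
  unfold Lam
  field_simp
  ring

theorem statement12_general (p q tp t2 t3 : ℂ)
    (hp : p ≠ 0) (htp : tp ≠ 0) (ht2 : t2 ≠ 0)
    (t1 s1 s2 sp X11 Y τp τ2 τ3 : ℂ)
    (ht1 : t1 = q * t2 / p) (hs1 : s1 = p * t3 / t2) (hs2 : s2 = q * t3 / t2)
    (hsp : sp = q * (t3 ^ 2 - t3 * p + p ^ 2) / (p * tp))
    (hX11 : X11 = 0) (hY : Y = (t3 ^ 2 - t3 * p + p ^ 2) / tp + q * tp / p)
    (hτp : τp = tp / p) (hτ2 : τ2 = t2 / p) (hτ3 : τ3 = t3 / p) :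
    (∀ z1 z2 : ℂ,
      τ2 * τp * Lam p q t1 t2 s1 s2 tp sp X11 Y z1 z2 =
        (p + q * z1 * z2) * (t2 + t1 * z1 * z2) *
          ((τ3 ^ 2 - τ3 + 1) * z1 * z2 - τp * (z1 + z2 - τ3 * z2) + τp ^ 2)) ∧
    ∀ z1 z2 : ℂ, Lam p q t1 t2 s1 s2 tp sp X11 Y z2 z1 ≠ 0 →
      Sc p q t1 t2 s1 s2 tp sp X11 Y z1 z2 =
          -(((τ3 ^ 2 - τ3 + 1) * z1 * z2 - τp * (z1 + z2 - τ3 * z2) + τp ^ 2) /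
            ((τ3 ^ 2 - τ3 + 1) * z1 * z2 - τp * (z1 + z2 - τ3 * z1) + τp ^ 2)) ∧
      Nc p q t1 t2 s1 s2 tp sp X11 Y z1 z2 =
          τ2 * τp * (z1 - z2) /
            (2 * ((τ3 ^ 2 - τ3 + 1) * z1 * z2 - τp * (z1 + z2 - τ3 * z1) + τp ^ 2)) := by
  subst ht1 hs1 hs2 hsp hX11 hY hτp hτ2 hτ3
  have factor := fun z1 z2 => Lam_spR_factorization q t3 z1 z2 hp htp ht2
  refine ⟨factor, fun z1 z2 hne => ?_⟩
  have hc : t2 / p * (tp / p) ≠ 0 := mul_ne_zero (div_ne_zero ht2 hp) (div_ne_zero htp hp)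
  have swapped := factor z2 z1
  simp only [mul_right_comm _ z2 z1, add_comm z2 z1] at swapped
  exact ⟨by rw [Sc, div_eq_div_of_mul_eq_mul_s12 hc (factor z1 z2) swapped hne],
    by rw [Nc, mul_assoc (z1 - z2), mul_div_mul_eq_of_mul_eq_mul _ _ hc swapped hne]⟩

/-- Factorization of `Λ` and the resulting `S` and `N` for the SpR model. -/
theorem statement12 (p q tp t2 t3 : ℂ)
    (hp : p ≠ 0) (hq : q ≠ 0) (htp : tp ≠ 0) (ht2 : t2 ≠ 0) (ht3 : t3 ≠ 0)
    (t1 s1 s2 sp X11 Y τp τ2 τ3 : ℂ)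
    (ht1 : t1 = q * t2 / p) (hs1 : s1 = p * t3 / t2) (hs2 : s2 = q * t3 / t2)
    (hsp : sp = q * (t3 ^ 2 - t3 * p + p ^ 2) / (p * tp))
    (hX11 : X11 = 0) (hY : Y = (t3 ^ 2 - t3 * p + p ^ 2) / tp + q * tp / p)
    (hτp : τp = tp / p) (hτ2 : τ2 = t2 / p) (hτ3 : τ3 = t3 / p) :
    (∀ z1 z2 : ℂ,
      τ2 * τp * Lam p q t1 t2 s1 s2 tp sp X11 Y z1 z2 =
        (p + q * z1 * z2) * (t2 + t1 * z1 * z2) *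
          ((τ3 ^ 2 - τ3 + 1) * z1 * z2 - τp * (z1 + z2 - τ3 * z2) + τp ^ 2)) ∧
    ∀ z1 z2 : ℂ, Lam p q t1 t2 s1 s2 tp sp X11 Y z2 z1 ≠ 0 →
      Sc p q t1 t2 s1 s2 tp sp X11 Y z1 z2 =
          -(((τ3 ^ 2 - τ3 + 1) * z1 * z2 - τp * (z1 + z2 - τ3 * z2) + τp ^ 2) /
            ((τ3 ^ 2 - τ3 + 1) * z1 * z2 - τp * (z1 + z2 - τ3 * z1) + τp ^ 2)) ∧
      Nc p q t1 t2 s1 s2 tp sp X11 Y z1 z2 =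
          τ2 * τp * (z1 - z2) /
            (2 * ((τ3 ^ 2 - τ3 + 1) * z1 * z2 - τp * (z1 + z2 - τ3 * z1) + τp ^ 2)) :=
  statement12_general p q tp t2 t3 hp htp ht2 t1 s1 s2 sp X11 Y τp τ2 τ3 ht1 hs1 hs2 hsp hX11 hY hτp
    hτ2 hτ3
end
end

section
/- For the SB5 parameter family (generalization of the special branch genus 5 model), the amplitude Λ factorizes: for all complex z1, z2, Λ(z1,z2) = −p·(p + q·z1z2)·( θ·z1z2·(z1 − J²·z2) − Υ·z1z2 + z1 − J·z2 ). Consequently, wherever the denominators are nonzero, S(z1,z2) = −( θ·z1z2·(z1−J²·z2) − Υ·z1z2 + z1 − J·z2 )/( θ·z1z2·(z2−J²·z1) − Υ·z1z2 + z2 − J·z1 ) and N(z1,z2) = −τ2·(z1−z2)·(θ·z1z2+1)/( 2·( θ·z1z2·(z2−J²·z1) − Υ·z1z2 + z2 − J·z1 ) ). -/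
noncomputable section

theorem Lam_sb5_eq {p q t2 Y J : ℂ} (hp : p ≠ 0) (ht2 : t2 ≠ 0) (hJ : J ^ 2 + J + 1 = 0)
    (z1 z2 : ℂ) :
    Lam p q (q * t2 / p) t2 (-J ^ 2 * p ^ 2 / t2) (-J * p * q / t2) 0 0 0 Y z1 z2 =
      -p * (p + q * z1 * z2) *
        (q / p * z1 * z2 * (z1 - J ^ 2 * z2) - Y / p * z1 * z2 + z1 - J * z2) := by
  have hfirst_term : z2 * (-J ^ 2 * p ^ 2 / t2 + -J * p * q / t2 * z1 * z2) *
      (t2 + q * t2 / p * z1 * z2) = -J * z2 * (J * p + q * z1 * z2) * (p + q * z1 * z2) := by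
    field_simp
    ring
  rw [Lam, hfirst_term]
  field_simp
  -- the two sides differ by `(J ^ 2 + J + 1) z2 (p + q z1 z2) ^ 2`
  linear_combination -(z2 * (p + q * z1 * z2) ^ 2) * hJ

theorem Sc_eq_neg_div_of_Lam_eq {p q t1 t2 s1 s2 tp sp X11 Y z1 z2 a F G : ℂ}
    (h12 : Lam p q t1 t2 s1 s2 tp sp X11 Y z1 z2 = a * F)
    (h21 : Lam p q t1 t2 s1 s2 tp sp X11 Y z2 z1 = a * G) (ha : a ≠ 0) :
    Sc p q t1 t2 s1 s2 tp sp X11 Y z1 z2 = -(F / G) := by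
  rw [Sc, h12, h21, mul_div_mul_left _ _ ha]

theorem Nc_eq_of_Lam_eq {p q t2 s1 s2 tp sp X11 Y z1 z2 G : ℂ} (hp : p ≠ 0)
    (h21 : Lam p q (q * t2 / p) t2 s1 s2 tp sp X11 Y z2 z1 = -p * (p + q * z1 * z2) * G) :
    Nc p q (q * t2 / p) t2 s1 s2 tp sp X11 Y z1 z2 =
      -(t2 / p * (z1 - z2) * (q / p * z1 * z2 + 1) / (2 * G)) := by
  rw [Nc, h21]
  field_simp
  ring

theorem statement13_general (p q t2 Y J : ℂ)
    (hp : p ≠ 0) (ht2 : t2 ≠ 0) (hJ : J ^ 2 + J + 1 = 0)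
    (tp sp t1 s1 s2 X11 θ Υ τ2 : ℂ)
    (htp : tp = 0) (hsp : sp = 0) (ht1 : t1 = q * t2 / p)
    (hs1 : s1 = -J ^ 2 * p ^ 2 / t2) (hs2 : s2 = -J * p * q / t2) (hX11 : X11 = 0)
    (hθ : θ = q / p) (hΥ : Υ = Y / p) (hτ2 : τ2 = t2 / p) :
    (∀ z1 z2 : ℂ,
      Lam p q t1 t2 s1 s2 tp sp X11 Y z1 z2 =
        -p * (p + q * z1 * z2) *
          (θ * z1 * z2 * (z1 - J ^ 2 * z2) - Υ * z1 * z2 + z1 - J * z2)) ∧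
    ∀ z1 z2 : ℂ, Lam p q t1 t2 s1 s2 tp sp X11 Y z2 z1 ≠ 0 →
      Sc p q t1 t2 s1 s2 tp sp X11 Y z1 z2 =
          -((θ * z1 * z2 * (z1 - J ^ 2 * z2) - Υ * z1 * z2 + z1 - J * z2) /
            (θ * z1 * z2 * (z2 - J ^ 2 * z1) - Υ * z1 * z2 + z2 - J * z1)) ∧
      Nc p q t1 t2 s1 s2 tp sp X11 Y z1 z2 =
          -(τ2 * (z1 - z2) * (θ * z1 * z2 + 1) /
            (2 * (θ * z1 * z2 * (z2 - J ^ 2 * z1) - Υ * z1 * z2 + z2 - J * z1))) := by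
  subst htp hsp ht1 hs1 hs2 hX11 hθ hΥ hτ2
  have hfac := Lam_sb5_eq (q := q) (Y := Y) hp ht2 hJ
  refine ⟨hfac, fun z1 z2 hne => ?_⟩
  have h21 := (hfac z2 z1).trans (by ring :
    _ = -p * (p + q * z1 * z2) *
      (q / p * z1 * z2 * (z2 - J ^ 2 * z1) - Y / p * z1 * z2 + z2 - J * z1))
  have ha : -p * (p + q * z1 * z2) ≠ 0 := left_ne_zero_of_mul (h21 ▸ hne)
  exact ⟨Sc_eq_neg_div_of_Lam_eq (hfac z1 z2) h21 ha, Nc_eq_of_Lam_eq hp h21⟩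

/-- Factorization of `Λ` and the resulting `S` and `N` for the generalization
of the special branch genus 5 model (SB5). -/
theorem statement13 (p q t2 Y J : ℂ)
    (hp : p ≠ 0) (hq : q ≠ 0) (ht2 : t2 ≠ 0) (hJ : J ^ 2 + J + 1 = 0)
    (tp sp t1 s1 s2 X11 θ Υ τ2 : ℂ)
    (htp : tp = 0) (hsp : sp = 0) (ht1 : t1 = q * t2 / p)
    (hs1 : s1 = -J ^ 2 * p ^ 2 / t2) (hs2 : s2 = -J * p * q / t2) (hX11 : X11 = 0)
    (hθ : θ = q / p) (hΥ : Υ = Y / p) (hτ2 : τ2 = t2 / p) :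
    (∀ z1 z2 : ℂ,
      Lam p q t1 t2 s1 s2 tp sp X11 Y z1 z2 =
        -p * (p + q * z1 * z2) *
          (θ * z1 * z2 * (z1 - J ^ 2 * z2) - Υ * z1 * z2 + z1 - J * z2)) ∧
    ∀ z1 z2 : ℂ, Lam p q t1 t2 s1 s2 tp sp X11 Y z2 z1 ≠ 0 →
      Sc p q t1 t2 s1 s2 tp sp X11 Y z1 z2 =
          -((θ * z1 * z2 * (z1 - J ^ 2 * z2) - Υ * z1 * z2 + z1 - J * z2) /
            (θ * z1 * z2 * (z2 - J ^ 2 * z1) - Υ * z1 * z2 + z2 - J * z1)) ∧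
      Nc p q t1 t2 s1 s2 tp sp X11 Y z1 z2 =
          -(τ2 * (z1 - z2) * (θ * z1 * z2 + 1) /
            (2 * (θ * z1 * z2 * (z2 - J ^ 2 * z1) - Υ * z1 * z2 + z2 - J * z1))) :=
  statement13_general p q t2 Y J hp ht2 hJ tp sp t1 s1 s2 X11 θ Υ τ2 htp hsp ht1 hs1 hs2 hX11 hθ hΥ
    hτ2
end
end

section
/- For the 17V1 parameter family, the amplitude Λ factorizes: for all complex z1, z2, τ2·τp·Λ(z1,z2) = (p + q·z1z2)·(t2 + t1·z1z2)·(z1 − τp)·(z2 − τp). In particular Λ(z1,z2) = Λ(z2,z1), so wherever Λ ≠ 0 the scattering amplitude is trivial, S(z1,z2) = −1, and the decay coefficient is N(z1,z2) = τ2·τp·(z1−z2)/( 2·(z1−τp)·(z2−τp) ). -/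
noncomputable section

/-!
With `s1 = s2 = X11 = 0` the amplitude is `Λ = (p + q z1 z2) · E(z1, z2)` with `E` symmetric, so
`Λ` is symmetric and `S = -1`. The 17V1 relations make `τp · E = (p + q z1 z2)(z1 - τp)(z2 - τp)`
and `t2 + t1 z1 z2 = τ2 (p + q z1 z2)`, which gives the factorization; `N` is then obtained by
cancelling `Λ(z2, z1)` between its numerator and denominator.
-/

theorem Lam_comm_of_s_eq_zero (p q t1 t2 tp sp Y z1 z2 : ℂ) :
    Lam p q t1 t2 0 0 tp sp 0 Y z1 z2 = Lam p q t1 t2 0 0 tp sp 0 Y z2 z1 := by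
  simp only [Lam]
  ring

theorem Sc_eq_neg_one_of_Lam_comm {p q t1 t2 s1 s2 tp sp X11 Y z1 z2 : ℂ}
    (hcomm : Lam p q t1 t2 s1 s2 tp sp X11 Y z1 z2 = Lam p q t1 t2 s1 s2 tp sp X11 Y z2 z1)
    (hL : Lam p q t1 t2 s1 s2 tp sp X11 Y z2 z1 ≠ 0) :
    Sc p q t1 t2 s1 s2 tp sp X11 Y z1 z2 = -1 := by
  rw [Sc, hcomm, div_self hL]

theorem Nc_eq_of_mul_Lam_eq {p q t1 t2 s1 s2 tp sp X11 Y z1 z2 a c : ℂ} (hc : c ≠ 0)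
    (hL : Lam p q t1 t2 s1 s2 tp sp X11 Y z2 z1 ≠ 0)
    (hfac : c * Lam p q t1 t2 s1 s2 tp sp X11 Y z2 z1 =
      (p + q * z2 * z1) * (t2 + t1 * z2 * z1) * (z2 - a) * (z1 - a)) :
    Nc p q t1 t2 s1 s2 tp sp X11 Y z1 z2 = c * (z1 - z2) / (2 * (z1 - a) * (z2 - a)) := by
  have hrhs : (p + q * z2 * z1) * (t2 + t1 * z2 * z1) * (z2 - a) * (z1 - a) ≠ 0 :=
    hfac ▸ mul_ne_zero hc hL
  have hz1 : z1 - a ≠ 0 := right_ne_zero_of_mul hrhs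
  have hz2 : z2 - a ≠ 0 := right_ne_zero_of_mul (left_ne_zero_of_mul hrhs)
  rw [Nc, div_eq_div_iff (mul_ne_zero two_ne_zero hL) (by simp [hz1, hz2])]
  linear_combination (-2 * (z1 - z2)) * hfac

theorem Lam_factorization_17V1 {p tp : ℂ} (hp : p ≠ 0) (htp : tp ≠ 0) (q t2 z1 z2 : ℂ) :
    t2 / p * (tp / p) *
        Lam p q (q * t2 / p) t2 0 0 tp (p * q / tp) 0 (p ^ 2 / tp + q * tp / p) z1 z2 =
      (p + q * z1 * z2) * (t2 + q * t2 / p * z1 * z2) * (z1 - tp / p) * (z2 - tp / p) := by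
  simp only [Lam]
  field_simp
  ring

theorem statement14_general (p q tp t2 : ℂ)
    (hp : p ≠ 0) (htp : tp ≠ 0) (ht2 : t2 ≠ 0)
    (t1 s1 s2 sp X11 Y τp τ2 : ℂ)
    (hs1 : s1 = 0) (hs2 : s2 = 0) (hsp : sp = p * q / tp) (ht1 : t1 = q * t2 / p)
    (hX11 : X11 = 0) (hY : Y = p ^ 2 / tp + q * tp / p)
    (hτp : τp = tp / p) (hτ2 : τ2 = t2 / p) :
    (∀ z1 z2 : ℂ,
      τ2 * τp * Lam p q t1 t2 s1 s2 tp sp X11 Y z1 z2 =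
        (p + q * z1 * z2) * (t2 + t1 * z1 * z2) * (z1 - τp) * (z2 - τp)) ∧
    (∀ z1 z2 : ℂ,
      Lam p q t1 t2 s1 s2 tp sp X11 Y z1 z2 = Lam p q t1 t2 s1 s2 tp sp X11 Y z2 z1) ∧
    ∀ z1 z2 : ℂ, Lam p q t1 t2 s1 s2 tp sp X11 Y z2 z1 ≠ 0 →
      Sc p q t1 t2 s1 s2 tp sp X11 Y z1 z2 = -1 ∧
      Nc p q t1 t2 s1 s2 tp sp X11 Y z1 z2 =
          τ2 * τp * (z1 - z2) / (2 * (z1 - τp) * (z2 - τp)) := by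
  subst hs1 hs2 hsp ht1 hX11 hY hτp hτ2
  have hτ : t2 / p * (tp / p) ≠ 0 := mul_ne_zero (div_ne_zero ht2 hp) (div_ne_zero htp hp)
  refine ⟨Lam_factorization_17V1 hp htp q t2, Lam_comm_of_s_eq_zero _ _ _ _ _ _ _,
    fun z1 z2 hL => ⟨Sc_eq_neg_one_of_Lam_comm (Lam_comm_of_s_eq_zero _ _ _ _ _ _ _ _ _) hL,
      Nc_eq_of_mul_Lam_eq hτ hL (Lam_factorization_17V1 hp htp q t2 z2 z1)⟩⟩

/-- Factorization of `Λ` for the 17V1 model: `Λ` is symmetric, the scattering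
amplitude is trivial and the decay coefficient factorizes. -/
theorem statement14 (p q tp t2 : ℂ)
    (hp : p ≠ 0) (hq : q ≠ 0) (htp : tp ≠ 0) (ht2 : t2 ≠ 0)
    (t1 s1 s2 sp X11 Y τp τ2 : ℂ)
    (hs1 : s1 = 0) (hs2 : s2 = 0) (hsp : sp = p * q / tp) (ht1 : t1 = q * t2 / p)
    (hX11 : X11 = 0) (hY : Y = p ^ 2 / tp + q * tp / p)
    (hτp : τp = tp / p) (hτ2 : τ2 = t2 / p) :
    (∀ z1 z2 : ℂ,
      τ2 * τp * Lam p q t1 t2 s1 s2 tp sp X11 Y z1 z2 =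
        (p + q * z1 * z2) * (t2 + t1 * z1 * z2) * (z1 - τp) * (z2 - τp)) ∧
    (∀ z1 z2 : ℂ,
      Lam p q t1 t2 s1 s2 tp sp X11 Y z1 z2 = Lam p q t1 t2 s1 s2 tp sp X11 Y z2 z1) ∧
    ∀ z1 z2 : ℂ, Lam p q t1 t2 s1 s2 tp sp X11 Y z2 z1 ≠ 0 →
      Sc p q t1 t2 s1 s2 tp sp X11 Y z1 z2 = -1 ∧
      Nc p q t1 t2 s1 s2 tp sp X11 Y z1 z2 =
          τ2 * τp * (z1 - z2) / (2 * (z1 - τp) * (z2 - τp)) :=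
  statement14_general p q tp t2 hp htp ht2 t1 s1 s2 sp X11 Y τp τ2 hs1 hs2 hsp ht1 hX11 hY hτp hτ2
end
end

section
/- For the 17V2 parameter family, the amplitude Λ factorizes: for all complex z1, z2, τp²·Λ(z1,z2) = p·(p + q·z1z2)·(z1 − τp)·(z2 − τp)·( θ·τp·z1z2 − (θ·τp² + 1)·z2 + τp ). Consequently, wherever the denominators are nonzero, S(z1,z2) = −( θ·τp·z1z2 − (θ·τp²+1)·z2 + τp )/( θ·τp·z1z2 − (θ·τp²+1)·z1 + τp ) and N(z1,z2) = −τ2·(z1−z2)·(z1z2 − τp²)/( 2·( θ·τp·z1z2 − (θ·τp²+1)·z1 + τp )·(z1−τp)·(z2−τp) ). -/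
/-!
Once the 17V2 parameters are substituted and denominators cleared, the factorization of `Λ` is a
polynomial identity. The prefactor `p (p + q z1 z2) (z1 - τp) (z2 - τp)` is symmetric in `z1, z2`,
so it cancels from `S`; its part `p (p + q z1 z2)` cancels from `N` once
`t2 + t1 z1 z2 = -τ2 p (z1 z2 - τp²) / τp²` is factored. Both are nonzero because `Λ(z2, z1) ≠ 0`.
-/

noncomputable section

theorem div_eq_div_of_mul_eq_mul_of_mul_eq_mul_s15 {G₀ : Type*} [CommGroupWithZero G₀]
    {a c x y f g : G₀} (ha : a ≠ 0) (hy : y ≠ 0) (hx : a * x = c * f) (hyg : a * y = c * g) :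
    x / y = f / g := by
  have hc : c ≠ 0 := left_ne_zero_of_mul (hyg ▸ mul_ne_zero ha hy)
  rw [← mul_div_mul_left x y ha, hx, hyg, mul_div_mul_left f g hc]

section Model17V2

variable {p q tp t2 τp τ2 θ : ℂ}

theorem sq_mul_Lam_17V2 (hp : p ≠ 0) (htp : tp ≠ 0) (hτp : τp = tp / p) (hθ : θ = q / p)
    (z1 z2 : ℂ) :
    τp ^ 2 * Lam p q (-(p ^ 2 * t2) / tp ^ 2) t2 0 0 tp (p * q / tp)
        (p ^ 2 / tp + q * tp / p) (p ^ 2 / tp + q * tp / p) z1 z2 =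
      p * (p + q * z1 * z2) * (z1 - τp) * (z2 - τp) *
        (θ * τp * z1 * z2 - (θ * τp ^ 2 + 1) * z2 + τp) := by
  subst hτp hθ
  unfold Lam
  field_simp
  ring

theorem sq_mul_t2_add_t1_17V2 (hp : p ≠ 0) (htp : tp ≠ 0) (hτp : τp = tp / p)
    (hτ2 : τ2 = t2 / p) (z1 z2 : ℂ) :
    τp ^ 2 * (t2 + -(p ^ 2 * t2) / tp ^ 2 * z1 * z2) = -(p * τ2 * (z1 * z2 - τp ^ 2)) := by
  subst hτp hτ2
  field_simp
  ring

end Model17V2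

theorem statement15_general (p q tp t2 : ℂ)
    (hp : p ≠ 0) (htp : tp ≠ 0)
    (t1 s1 s2 sp X11 Y τp τ2 θ : ℂ)
    (hs1 : s1 = 0) (hs2 : s2 = 0) (hsp : sp = p * q / tp)
    (ht1 : t1 = -(p ^ 2 * t2) / tp ^ 2)
    (hX11 : X11 = p ^ 2 / tp + q * tp / p) (hY : Y = p ^ 2 / tp + q * tp / p)
    (hτp : τp = tp / p) (hτ2 : τ2 = t2 / p) (hθ : θ = q / p) :
    (∀ z1 z2 : ℂ,
      τp ^ 2 * Lam p q t1 t2 s1 s2 tp sp X11 Y z1 z2 =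
        p * (p + q * z1 * z2) * (z1 - τp) * (z2 - τp) *
          (θ * τp * z1 * z2 - (θ * τp ^ 2 + 1) * z2 + τp)) ∧
    ∀ z1 z2 : ℂ, Lam p q t1 t2 s1 s2 tp sp X11 Y z2 z1 ≠ 0 →
      Sc p q t1 t2 s1 s2 tp sp X11 Y z1 z2 =
          -((θ * τp * z1 * z2 - (θ * τp ^ 2 + 1) * z2 + τp) /
            (θ * τp * z1 * z2 - (θ * τp ^ 2 + 1) * z1 + τp)) ∧
      Nc p q t1 t2 s1 s2 tp sp X11 Y z1 z2 =
          -(τ2 * (z1 - z2) * (z1 * z2 - τp ^ 2) /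
            (2 * (θ * τp * z1 * z2 - (θ * τp ^ 2 + 1) * z1 + τp) *
              (z1 - τp) * (z2 - τp))) := by
  subst hs1 hs2 hsp ht1 hX11 hY
  have hτp0 : τp ^ 2 ≠ 0 := pow_ne_zero 2 (hτp ▸ div_ne_zero htp hp)
  have hfac := sq_mul_Lam_17V2 (t2 := t2) hp htp hτp hθ
  refine ⟨hfac, fun z1 z2 hΛ => ⟨?_, ?_⟩⟩
  · rw [Sc, div_eq_div_of_mul_eq_mul_of_mul_eq_mul_s15 hτp0 hΛ (hfac z1 z2) ((hfac z2 z1).trans ?_)]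
    ring
  · rw [Nc, ← neg_div, div_eq_div_of_mul_eq_mul_of_mul_eq_mul_s15 hτp0 (mul_ne_zero two_ne_zero hΛ)
      (c := p * (p + q * z1 * z2))]
    · rw [mul_left_comm, sq_mul_t2_add_t1_17V2 hp htp hτp hτ2]
      ring
    · rw [mul_left_comm, hfac z2 z1]
      ring

/-- Factorization of `Λ` and the resulting `S` and `N` for the 17V2 model. -/
theorem statement15 (p q tp t2 : ℂ)
    (hp : p ≠ 0) (hq : q ≠ 0) (htp : tp ≠ 0) (ht2 : t2 ≠ 0)
    (t1 s1 s2 sp X11 Y τp τ2 θ : ℂ)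
    (hs1 : s1 = 0) (hs2 : s2 = 0) (hsp : sp = p * q / tp)
    (ht1 : t1 = -(p ^ 2 * t2) / tp ^ 2)
    (hX11 : X11 = p ^ 2 / tp + q * tp / p) (hY : Y = p ^ 2 / tp + q * tp / p)
    (hτp : τp = tp / p) (hτ2 : τ2 = t2 / p) (hθ : θ = q / p) :
    (∀ z1 z2 : ℂ,
      τp ^ 2 * Lam p q t1 t2 s1 s2 tp sp X11 Y z1 z2 =
        p * (p + q * z1 * z2) * (z1 - τp) * (z2 - τp) *
          (θ * τp * z1 * z2 - (θ * τp ^ 2 + 1) * z2 + τp)) ∧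
    ∀ z1 z2 : ℂ, Lam p q t1 t2 s1 s2 tp sp X11 Y z2 z1 ≠ 0 →
      Sc p q t1 t2 s1 s2 tp sp X11 Y z1 z2 =
          -((θ * τp * z1 * z2 - (θ * τp ^ 2 + 1) * z2 + τp) /
            (θ * τp * z1 * z2 - (θ * τp ^ 2 + 1) * z1 + τp)) ∧
      Nc p q t1 t2 s1 s2 tp sp X11 Y z1 z2 =
          -(τ2 * (z1 - z2) * (z1 * z2 - τp ^ 2) /
            (2 * (θ * τp * z1 * z2 - (θ * τp ^ 2 + 1) * z1 + τp) *
              (z1 - τp) * (z2 - τp))) :=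
  statement15_general p q tp t2 hp htp t1 s1 s2 sp X11 Y τp τ2 θ hs1 hs2 hsp ht1 hX11 hY hτp hτ2 hθ
end
end

section
/- For the 14V1 parameter family, the amplitude Λ factorizes: for all complex z1, z2, Λ(z1,z2) = −(p⁴/tp²)·(z1 − τp)·(z2 − τp)². Consequently, wherever the denominators are nonzero, S(z1,z2) = −(z2 − τp)/(z1 − τp) and N(z1,z2) = τ2·(z1−z2)·(z1z2 − τp²)/( 2·(z1−τp)²·(z2−τp) ). -/
noncomputable section

/-!
With `q = s₁ = s₂ = s_p = 0` the first term of `Λ` vanishes, and for `X₁₁ = Y = p²/t_p` both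
remaining factors are multiples of `z - τ_p`, where `τ_p = t_p/p`:
`X₁₁ z₂ - p = (p²/t_p)(z₂ - τ_p)` and `Y z₁ z₂ - p(z₁ + z₂) + t_p = (p²/t_p)(z₁ - τ_p)(z₂ - τ_p)`.
The choice of `t₁` likewise makes `t₂ + t₁ z₁ z₂ = -(p² t₂/t_p²)(z₁ z₂ - τ_p²)`, and `S` and `N`
follow by cancelling common factors.
-/

section FourteenV1

variable {p tp : ℂ} (hp : p ≠ 0) (htp : tp ≠ 0)
include hp htp

theorem Lam_fourteenV1 (t1 t2 z1 z2 : ℂ) :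
    Lam p 0 t1 t2 0 0 tp 0 (p ^ 2 / tp) (p ^ 2 / tp) z1 z2 =
      -(p ^ 4 / tp ^ 2) * (z1 - tp / p) * (z2 - tp / p) ^ 2 := by
  unfold Lam
  field_simp
  ring

theorem sub_ne_zero_of_Lam_fourteenV1_ne_zero {t1 t2 z1 z2 : ℂ}
    (h : Lam p 0 t1 t2 0 0 tp 0 (p ^ 2 / tp) (p ^ 2 / tp) z1 z2 ≠ 0) :
    z1 - tp / p ≠ 0 ∧ z2 - tp / p ≠ 0 := by
  rw [Lam_fourteenV1 hp htp] at h
  exact ⟨right_ne_zero_of_mul (left_ne_zero_of_mul h),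
    (pow_ne_zero_iff two_ne_zero).mp (right_ne_zero_of_mul h)⟩

theorem Sc_fourteenV1 {t1 t2 z1 z2 : ℂ}
    (h : Lam p 0 t1 t2 0 0 tp 0 (p ^ 2 / tp) (p ^ 2 / tp) z2 z1 ≠ 0) :
    Sc p 0 t1 t2 0 0 tp 0 (p ^ 2 / tp) (p ^ 2 / tp) z1 z2 = -((z2 - tp / p) / (z1 - tp / p)) := by
  obtain ⟨h2, h1⟩ := sub_ne_zero_of_Lam_fourteenV1_ne_zero hp htp h
  rw [Sc, Lam_fourteenV1 hp htp, Lam_fourteenV1 hp htp, neg_inj]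
  field_simp

theorem Nc_fourteenV1 {t2 z1 z2 : ℂ}
    (h : Lam p 0 (-(p ^ 2 * t2) / tp ^ 2) t2 0 0 tp 0 (p ^ 2 / tp) (p ^ 2 / tp) z2 z1 ≠ 0) :
    Nc p 0 (-(p ^ 2 * t2) / tp ^ 2) t2 0 0 tp 0 (p ^ 2 / tp) (p ^ 2 / tp) z1 z2 =
      t2 / p * (z1 - z2) * (z1 * z2 - (tp / p) ^ 2) /
        (2 * (z1 - tp / p) ^ 2 * (z2 - tp / p)) := by
  obtain ⟨h2, h1⟩ := sub_ne_zero_of_Lam_fourteenV1_ne_zero hp htp h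
  rw [Nc, Lam_fourteenV1 hp htp]
  field_simp
  ring

end FourteenV1

theorem statement16_general (p tp t2 : ℂ)
    (hp : p ≠ 0) (htp : tp ≠ 0)
    (q t1 s1 s2 sp X11 Y τp τ2 : ℂ)
    (hq : q = 0) (hs1 : s1 = 0) (hs2 : s2 = 0) (hsp : sp = 0)
    (ht1 : t1 = -(p ^ 2 * t2) / tp ^ 2)
    (hX11 : X11 = p ^ 2 / tp) (hY : Y = p ^ 2 / tp)
    (hτp : τp = tp / p) (hτ2 : τ2 = t2 / p) :
    (∀ z1 z2 : ℂ,
      Lam p q t1 t2 s1 s2 tp sp X11 Y z1 z2 =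
        -(p ^ 4 / tp ^ 2) * (z1 - τp) * (z2 - τp) ^ 2) ∧
    ∀ z1 z2 : ℂ, Lam p q t1 t2 s1 s2 tp sp X11 Y z2 z1 ≠ 0 →
      Sc p q t1 t2 s1 s2 tp sp X11 Y z1 z2 = -((z2 - τp) / (z1 - τp)) ∧
      Nc p q t1 t2 s1 s2 tp sp X11 Y z1 z2 =
          τ2 * (z1 - z2) * (z1 * z2 - τp ^ 2) /
            (2 * (z1 - τp) ^ 2 * (z2 - τp)) := by
  subst hq hs1 hs2 hsp ht1 hX11 hY hτp hτ2
  exact ⟨Lam_fourteenV1 hp htp _ _, fun z1 z2 h =>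
    ⟨Sc_fourteenV1 hp htp h, Nc_fourteenV1 hp htp h⟩⟩

/-- Factorization of `Λ` and the resulting `S` and `N` for the 14V1 model. -/
theorem statement16 (p tp t2 : ℂ)
    (hp : p ≠ 0) (htp : tp ≠ 0) (ht2 : t2 ≠ 0)
    (q t1 s1 s2 sp X11 Y τp τ2 : ℂ)
    (hq : q = 0) (hs1 : s1 = 0) (hs2 : s2 = 0) (hsp : sp = 0)
    (ht1 : t1 = -(p ^ 2 * t2) / tp ^ 2)
    (hX11 : X11 = p ^ 2 / tp) (hY : Y = p ^ 2 / tp)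
    (hτp : τp = tp / p) (hτ2 : τ2 = t2 / p) :
    (∀ z1 z2 : ℂ,
      Lam p q t1 t2 s1 s2 tp sp X11 Y z1 z2 =
        -(p ^ 4 / tp ^ 2) * (z1 - τp) * (z2 - τp) ^ 2) ∧
    ∀ z1 z2 : ℂ, Lam p q t1 t2 s1 s2 tp sp X11 Y z2 z1 ≠ 0 →
      Sc p q t1 t2 s1 s2 tp sp X11 Y z1 z2 = -((z2 - τp) / (z1 - τp)) ∧
      Nc p q t1 t2 s1 s2 tp sp X11 Y z1 z2 =
          τ2 * (z1 - z2) * (z1 * z2 - τp ^ 2) /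
            (2 * (z1 - τp) ^ 2 * (z2 - τp)) :=
  statement16_general p tp t2 hp htp q t1 s1 s2 sp X11 Y τp τ2 hq hs1 hs2 hsp ht1 hX11 hY hτp hτ2
end
end

section
/- For the 14V2 parameter family, the amplitude Λ factorizes: for all complex z1, z2, Λ(z1,z2) = (p³/tp)·(z1 − τp)·(z2 − τp). In particular Λ(z1,z2) = Λ(z2,z1), so wherever Λ ≠ 0 the scattering amplitude is trivial, S(z1,z2) = −1, and the decay coefficient is N(z1,z2) = τ2·(z1−z2)·(z1z2 + τp²)/( 2·τp·(z1−τp)·(z2−τp) ). -/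
noncomputable section

/-! With `q = s1 = s2 = sp = X11 = 0` the amplitude reduces to `p · (Y z1 z2 - p (z1 + z2) + tp)`,
and the choice `Y = p² / tp` makes the quadratic in parentheses a perfect product
`(p² / tp) (z1 - τp) (z2 - τp)`, symmetric in `z1, z2`. The factor `t2 + t1 z1 z2` of `N`
becomes `(t2 / tp²) (tp² + p² z1 z2)`, which gives the formula for `N`. -/

theorem Sc_eq_neg_one_of_Lam_symm {p q t1 t2 s1 s2 tp sp X11 Y z1 z2 : ℂ}
    (hsymm : Lam p q t1 t2 s1 s2 tp sp X11 Y z1 z2 = Lam p q t1 t2 s1 s2 tp sp X11 Y z2 z1)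
    (hne : Lam p q t1 t2 s1 s2 tp sp X11 Y z2 z1 ≠ 0) :
    Sc p q t1 t2 s1 s2 tp sp X11 Y z1 z2 = -1 := by
  rw [Sc, hsymm, div_self hne]

section Family14V2

variable {p tp : ℂ}

theorem Lam_14V2 (hp : p ≠ 0) (htp : tp ≠ 0) (t2 z1 z2 : ℂ) :
    Lam p 0 (p ^ 2 * t2 / tp ^ 2) t2 0 0 tp 0 0 (p ^ 2 / tp) z1 z2 =
      p ^ 3 / tp * (z1 - tp / p) * (z2 - tp / p) := by
  simp only [Lam]
  field_simp
  ring

theorem Nc_14V2 (hp : p ≠ 0) (htp : tp ≠ 0) {t2 z1 z2 : ℂ}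
    (hne : Lam p 0 (p ^ 2 * t2 / tp ^ 2) t2 0 0 tp 0 0 (p ^ 2 / tp) z2 z1 ≠ 0) :
    Nc p 0 (p ^ 2 * t2 / tp ^ 2) t2 0 0 tp 0 0 (p ^ 2 / tp) z1 z2 =
      t2 / p * (z1 - z2) * (z1 * z2 + (tp / p) ^ 2) /
        (2 * (tp / p) * (z1 - tp / p) * (z2 - tp / p)) := by
  rw [Lam_14V2 hp htp] at hne
  have h1 : z1 - tp / p ≠ 0 := right_ne_zero_of_mul hne
  have h2 : z2 - tp / p ≠ 0 := right_ne_zero_of_mul (left_ne_zero_of_mul hne)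
  rw [Nc, Lam_14V2 hp htp]
  field_simp
  ring

theorem Lam_14V2_comm (hp : p ≠ 0) (htp : tp ≠ 0) (t2 z1 z2 : ℂ) :
    Lam p 0 (p ^ 2 * t2 / tp ^ 2) t2 0 0 tp 0 0 (p ^ 2 / tp) z1 z2 =
      Lam p 0 (p ^ 2 * t2 / tp ^ 2) t2 0 0 tp 0 0 (p ^ 2 / tp) z2 z1 := by
  rw [Lam_14V2 hp htp, Lam_14V2 hp htp, mul_right_comm]

end Family14V2

theorem statement17_general (p tp t2 : ℂ)
    (hp : p ≠ 0) (htp : tp ≠ 0)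
    (q t1 s1 s2 sp X11 Y τp τ2 : ℂ)
    (hq : q = 0) (hs1 : s1 = 0) (hs2 : s2 = 0) (hsp : sp = 0)
    (ht1 : t1 = p ^ 2 * t2 / tp ^ 2)
    (hX11 : X11 = 0) (hY : Y = p ^ 2 / tp)
    (hτp : τp = tp / p) (hτ2 : τ2 = t2 / p) :
    (∀ z1 z2 : ℂ,
      Lam p q t1 t2 s1 s2 tp sp X11 Y z1 z2 =
        (p ^ 3 / tp) * (z1 - τp) * (z2 - τp)) ∧
    (∀ z1 z2 : ℂ,
      Lam p q t1 t2 s1 s2 tp sp X11 Y z1 z2 = Lam p q t1 t2 s1 s2 tp sp X11 Y z2 z1) ∧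
    ∀ z1 z2 : ℂ, Lam p q t1 t2 s1 s2 tp sp X11 Y z2 z1 ≠ 0 →
      Sc p q t1 t2 s1 s2 tp sp X11 Y z1 z2 = -1 ∧
      Nc p q t1 t2 s1 s2 tp sp X11 Y z1 z2 =
          τ2 * (z1 - z2) * (z1 * z2 + τp ^ 2) /
            (2 * τp * (z1 - τp) * (z2 - τp)) := by
  subst hq hs1 hs2 hsp ht1 hX11 hY hτp hτ2
  exact ⟨Lam_14V2 hp htp t2, Lam_14V2_comm hp htp t2, fun z1 z2 hne =>
    ⟨Sc_eq_neg_one_of_Lam_symm (Lam_14V2_comm hp htp t2 z1 z2) hne, Nc_14V2 hp htp hne⟩⟩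

/-- Factorization of `Λ` for the 14V2 model: `Λ` is symmetric, the scattering
amplitude is trivial and the decay coefficient factorizes. -/
theorem statement17 (p tp t2 : ℂ)
    (hp : p ≠ 0) (htp : tp ≠ 0) (ht2 : t2 ≠ 0)
    (q t1 s1 s2 sp X11 Y τp τ2 : ℂ)
    (hq : q = 0) (hs1 : s1 = 0) (hs2 : s2 = 0) (hsp : sp = 0)
    (ht1 : t1 = p ^ 2 * t2 / tp ^ 2)
    (hX11 : X11 = 0) (hY : Y = p ^ 2 / tp)
    (hτp : τp = tp / p) (hτ2 : τ2 = t2 / p) :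
    (∀ z1 z2 : ℂ,
      Lam p q t1 t2 s1 s2 tp sp X11 Y z1 z2 =
        (p ^ 3 / tp) * (z1 - τp) * (z2 - τp)) ∧
    (∀ z1 z2 : ℂ,
      Lam p q t1 t2 s1 s2 tp sp X11 Y z1 z2 = Lam p q t1 t2 s1 s2 tp sp X11 Y z2 z1) ∧
    ∀ z1 z2 : ℂ, Lam p q t1 t2 s1 s2 tp sp X11 Y z2 z1 ≠ 0 →
      Sc p q t1 t2 s1 s2 tp sp X11 Y z1 z2 = -1 ∧
      Nc p q t1 t2 s1 s2 tp sp X11 Y z1 z2 =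
          τ2 * (z1 - z2) * (z1 * z2 + τp ^ 2) /
            (2 * τp * (z1 - τp) * (z2 - τp)) :=
  statement17_general p tp t2 hp htp q t1 s1 s2 sp X11 Y τp τ2 hq hs1 hs2 hsp ht1 hX11 hY hτp hτ2
end
end

section
/- Let p, q, tp, t2, t3 be nonzero complex numbers, V an arbitrary complex number, and let g be a nonzero complex number with g² = t2/p. Consider the SpR two-site Hamiltonian H12 with the symmetric diagonal gauge: v00 = 0, v01 = v10 = V/2, v02 = v20 = V + Y/2, v11 = V, v12 = v21 = (3V + Y)/2, v22 = 2V + Y, where Y = (t3² − t3·p + p²)/tp + q·tp/p. Set G = diag(1, g, 1), N0 = tp/p², sz = diag(0,1,2), τp = tp/p, θ = q/p, τ3 = t3/p, and δ = τ3² − τ3 + 1 + τp²·θ. Then the reduced Hamiltonian N0·(G⊗G)·( H12 − (V/2)·(sz⊗I3 + I3⊗sz) )·(G⊗G)^{-1} equals the 9×9 matrix (rows and columns indexed by the ordered basis |00⟩,|01⟩,|02⟩,|10⟩,|11⟩,|12⟩,|20⟩,|21⟩,|22⟩) whose only nonzero entries are: (|01⟩,|10⟩) = τp; (|10⟩,|01⟩)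 = τp·θ; (|02⟩,|02⟩) = δ/2; (|02⟩,|11⟩) = τp; (|02⟩,|20⟩) = τp²; (|11⟩,|02⟩) = τp·τ3·θ; (|11⟩,|20⟩) = τp·τ3; (|12⟩,|12⟩) = δ/2; (|12⟩,|21⟩) = τp·τ3; (|20⟩,|02⟩) = θ·(τ3²−τ3+1); (|20⟩,|11⟩) = τp·θ; (|20⟩,|20⟩) = δ/2; (|21⟩,|12⟩) = τp·τ3·θ; (|21⟩,|21⟩) = δ/2; (|22⟩,|22⟩) = δ. -/
/-! Conjugating by `D ⊗ D` with `D = diag x` rescales `E a b ⊗ E c d` by `x a x c / (x b x d)`.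
This fixes every term of `H12` except the `t1, t2` terms, which are multiplied by
`r = x 0 x 2 / x 1 ^ 2`, and the `s1, s2` terms, which are divided by it; for `x = (1, g, 1)`
we get `r = 1 / g ^ 2 = p / t2`. In the symmetric gauge the potential minus the `V / 2`-shift is
`Y / 2` times the number of sites in state `2`, so `V` drops out. Hence the reduced Hamiltonian is
again of the form `H12`, with parameters found by field arithmetic; in particular `N0 * Y = δ`. -/

open Matrix Kronecker

noncomputable section

def E (i j : Fin 3) : Matrix (Fin 3) (Fin 3) ℂ := Matrix.single i j 1

/-- The general two-site Hamiltonian of a U(1)-invariant three-state model. -/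
def H12 (p q t1 t2 t3 s1 s2 s3 tp sp : ℂ) (v : Fin 3 → Fin 3 → ℂ) :
    Matrix (Fin 3 × Fin 3) (Fin 3 × Fin 3) ℂ :=
  p • (E 0 1 ⊗ₖ E 1 0) + q • (E 1 0 ⊗ₖ E 0 1) + t1 • (E 2 1 ⊗ₖ E 0 1) +
    s1 • (E 1 2 ⊗ₖ E 1 0) + t2 • (E 0 1 ⊗ₖ E 2 1) + s2 • (E 1 0 ⊗ₖ E 1 2) +
    t3 • (E 1 2 ⊗ₖ E 2 1) + s3 • (E 2 1 ⊗ₖ E 1 2) + tp • (E 0 2 ⊗ₖ E 2 0) +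
    sp • (E 2 0 ⊗ₖ E 0 2) + ∑ i : Fin 3, ∑ j : Fin 3, v i j • (E i i ⊗ₖ E j j)

theorem kronecker_mul_kronecker_mul_inv_kronecker {m n K : Type*} [Fintype m] [DecidableEq m]
    [Fintype n] [DecidableEq n] [CommRing K] (P A : Matrix m m K) (Q B : Matrix n n K) :
    (P ⊗ₖ Q) * (A ⊗ₖ B) * (P ⊗ₖ Q)⁻¹ = (P * A * P⁻¹) ⊗ₖ (Q * B * Q⁻¹) := by
  rw [inv_kronecker, ← mul_kronecker_mul, ← mul_kronecker_mul]

theorem diagonal_mul_single_mul_inv_diagonal {n K : Type*} [Fintype n] [DecidableEq n] [Field K]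
    (x : n → K) (hx : ∀ i, x i ≠ 0) (i j : n) (c : K) :
    diagonal x * single i j c * (diagonal x)⁻¹ = single i j (x i * c / x j) := by
  have hinv : (diagonal x)⁻¹ = diagonal fun i => (x i)⁻¹ :=
    inv_eq_right_inv (by simp [diagonal_mul_diagonal, hx])
  ext a b
  simp only [hinv, mul_diagonal, diagonal_mul, single_apply]
  split_ifs <;> simp_all [div_eq_mul_inv]

theorem diagonal_mul_E_mul_inv_diagonal (x : Fin 3 → ℂ) (hx : ∀ i, x i ≠ 0) (i j : Fin 3) :
    diagonal x * E i j * (diagonal x)⁻¹ = (x i / x j) • E i j := by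
  rw [E, diagonal_mul_single_mul_inv_diagonal x hx, smul_single, smul_eq_mul, mul_one, mul_one]

theorem diagonal_kronecker_one_add_one_kronecker_diagonal (w : Fin 3 → ℂ) :
    diagonal w ⊗ₖ (1 : Matrix (Fin 3) (Fin 3) ℂ) + 1 ⊗ₖ diagonal w =
      ∑ i : Fin 3, ∑ j : Fin 3, (w i + w j) • (E i i ⊗ₖ E j j) := by
  calc diagonal w ⊗ₖ (1 : Matrix (Fin 3) (Fin 3) ℂ) + 1 ⊗ₖ diagonal w
      = diagonal fun ij : Fin 3 × Fin 3 => w ij.1 + w ij.2 := by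
        rw [← diagonal_one, diagonal_kronecker_diagonal, diagonal_kronecker_diagonal, diagonal_add]
        simp
    _ = ∑ i : Fin 3, ∑ j : Fin 3, (w i + w j) • (E i i ⊗ₖ E j j) := by
        simp_rw [E, single_kronecker_single, smul_single, smul_eq_mul, mul_one]
        rw [← Fintype.sum_prod_type' (f := fun i j => single (i, j) (i, j) (w i + w j)),
          sum_single_eq_diagonal]

theorem H12_sub_smul_kronecker_sum_diagonal
    (p q t1 t2 t3 s1 s2 s3 tp sp c : ℂ) (v : Fin 3 → Fin 3 → ℂ) (w : Fin 3 → ℂ) :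
    H12 p q t1 t2 t3 s1 s2 s3 tp sp v - c • (diagonal w ⊗ₖ 1 + 1 ⊗ₖ diagonal w) =
      H12 p q t1 t2 t3 s1 s2 s3 tp sp fun i j => v i j - c * (w i + w j) := by
  simp only [diagonal_kronecker_one_add_one_kronecker_diagonal, H12, Finset.smul_sum, smul_smul,
    sub_smul, Finset.sum_sub_distrib]
  abel

theorem smul_H12 (c p q t1 t2 t3 s1 s2 s3 tp sp : ℂ) (v : Fin 3 → Fin 3 → ℂ) :
    c • H12 p q t1 t2 t3 s1 s2 s3 tp sp v =
      H12 (c * p) (c * q) (c * t1) (c * t2) (c * t3) (c * s1) (c * s2) (c * s3) (c * tp) (c * sp)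
        (c • v) := by
  simp only [H12, smul_add, Finset.smul_sum, smul_smul, Pi.smul_apply, smul_eq_mul]

theorem H12_conj_diagonal (x : Fin 3 → ℂ) (hx : ∀ i, x i ≠ 0)
    (p q t1 t2 t3 s1 s2 s3 tp sp : ℂ) (v : Fin 3 → Fin 3 → ℂ) :
    (diagonal x ⊗ₖ diagonal x) * H12 p q t1 t2 t3 s1 s2 s3 tp sp v * (diagonal x ⊗ₖ diagonal x)⁻¹ =
      H12 p q (t1 * (x 0 * x 2 / x 1 ^ 2)) (t2 * (x 0 * x 2 / x 1 ^ 2)) t3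
        (s1 * (x 1 ^ 2 / (x 0 * x 2))) (s2 * (x 1 ^ 2 / (x 0 * x 2))) s3 tp sp v := by
  have hratio (a b : Fin 3) : x a / x b * (x b / x a) = 1 := by
    rw [div_mul_div_comm, mul_comm (x a), div_self (mul_ne_zero (hx b) (hx a))]
  simp only [H12, Matrix.mul_add, Matrix.add_mul, Matrix.mul_smul, Matrix.smul_mul,
    Matrix.mul_sum, Matrix.sum_mul, kronecker_mul_kronecker_mul_inv_kronecker,
    diagonal_mul_E_mul_inv_diagonal x hx, smul_kronecker, kronecker_smul, smul_smul, hratio,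
    div_self (hx _), mul_one]
  ring_nf

theorem statement18_general (p q tp t2 t3 : ℂ) (V g : ℂ)
    (hp : p ≠ 0) (htp : tp ≠ 0)
    (hg : g ≠ 0) (hg2 : g ^ 2 = t2 / p)
    (t1 s1 s2 s3 sp Y τp θ τ3 δ N0 : ℂ)
    (ht1 : t1 = q * t2 / p) (hs1 : s1 = p * t3 / t2) (hs2 : s2 = q * t3 / t2)
    (hs3 : s3 = q * t3 / p) (hsp : sp = q * (t3 ^ 2 - t3 * p + p ^ 2) / (p * tp))
    (hY : Y = (t3 ^ 2 - t3 * p + p ^ 2) / tp + q * tp / p)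
    (hτp : τp = tp / p) (hθ : θ = q / p) (hτ3 : τ3 = t3 / p)
    (hδ : δ = τ3 ^ 2 - τ3 + 1 + τp ^ 2 * θ) (hN0 : N0 = tp / p ^ 2) :
    N0 • ((Matrix.diagonal ![1, g, 1] ⊗ₖ Matrix.diagonal ![1, g, 1]) *
        (H12 p q t1 t2 t3 s1 s2 s3 tp sp
            ![![0, V / 2, V + Y / 2],
              ![V / 2, V, (3 * V + Y) / 2],
              ![V + Y / 2, (3 * V + Y) / 2, 2 * V + Y]] -
          (V / 2) • (Matrix.diagonal ![0, 1, 2] ⊗ₖ (1 : Matrix (Fin 3) (Fin 3) ℂ) +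
            (1 : Matrix (Fin 3) (Fin 3) ℂ) ⊗ₖ Matrix.diagonal ![0, 1, 2])) *
        (Matrix.diagonal ![1, g, 1] ⊗ₖ Matrix.diagonal ![1, g, 1])⁻¹)
      = τp • (E 0 1 ⊗ₖ E 1 0) + (τp * θ) • (E 1 0 ⊗ₖ E 0 1) +
        (δ / 2) • (E 0 0 ⊗ₖ E 2 2) + τp • (E 0 1 ⊗ₖ E 2 1) +
        (τp ^ 2) • (E 0 2 ⊗ₖ E 2 0) +
        (τp * τ3 * θ) • (E 1 0 ⊗ₖ E 1 2) + (τp * τ3) • (E 1 2 ⊗ₖ E 1 0) +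
        (δ / 2) • (E 1 1 ⊗ₖ E 2 2) + (τp * τ3) • (E 1 2 ⊗ₖ E 2 1) +
        (θ * (τ3 ^ 2 - τ3 + 1)) • (E 2 0 ⊗ₖ E 0 2) + (τp * θ) • (E 2 1 ⊗ₖ E 0 1) +
        (δ / 2) • (E 2 2 ⊗ₖ E 0 0) + (τp * τ3 * θ) • (E 2 1 ⊗ₖ E 1 2) +
        (δ / 2) • (E 2 2 ⊗ₖ E 1 1) + δ • (E 2 2 ⊗ₖ E 2 2) := by
  have hG : ∀ i, (![1, g, 1] : Fin 3 → ℂ) i ≠ 0 := by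
    intro i; fin_cases i <;> simp [hg]
  rw [H12_sub_smul_kronecker_sum_diagonal, H12_conj_diagonal _ hG,
    smul_H12]
  trans H12 τp (τp * θ) (τp * θ) τp (τp * τ3) (τp * τ3) (τp * τ3 * θ) (τp * τ3 * θ) (τp ^ 2)
    (θ * (τ3 ^ 2 - τ3 + 1)) ![![0, 0, δ / 2], ![0, 0, δ / 2], ![δ / 2, δ / 2, δ]]
  · obtain rfl : t2 = g ^ 2 * p := by rw [hg2, div_mul_cancel₀ _ hp]
    subst ht1 hs1 hs2 hs3 hsp hY hτp hθ hτ3 hδ hN0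
    simp only [Matrix.cons_val]
    congr 1
    case e_v =>
      ext i j
      fin_cases i <;> fin_cases j <;>
        simp only [Pi.smul_apply, smul_eq_mul, Fin.zero_eta, Fin.mk_one, Fin.reduceFinMk,
          Matrix.cons_val] <;>
        field_simp <;> ring
    all_goals field_simp
  · simp only [H12, Fin.sum_univ_three, Matrix.cons_val, zero_smul, add_zero, zero_add]
    abel

/-- The reduced Hamiltonian of the SpR model in the symmetric diagonal gauge. -/
theorem statement18 (p q tp t2 t3 : ℂ) (V g : ℂ)
    (hp : p ≠ 0) (hq : q ≠ 0) (htp : tp ≠ 0) (ht2 : t2 ≠ 0) (ht3 : t3 ≠ 0)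
    (hg : g ≠ 0) (hg2 : g ^ 2 = t2 / p)
    (t1 s1 s2 s3 sp Y τp θ τ3 δ N0 : ℂ)
    (ht1 : t1 = q * t2 / p) (hs1 : s1 = p * t3 / t2) (hs2 : s2 = q * t3 / t2)
    (hs3 : s3 = q * t3 / p) (hsp : sp = q * (t3 ^ 2 - t3 * p + p ^ 2) / (p * tp))
    (hY : Y = (t3 ^ 2 - t3 * p + p ^ 2) / tp + q * tp / p)
    (hτp : τp = tp / p) (hθ : θ = q / p) (hτ3 : τ3 = t3 / p)
    (hδ : δ = τ3 ^ 2 - τ3 + 1 + τp ^ 2 * θ) (hN0 : N0 = tp / p ^ 2) :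
    N0 • ((Matrix.diagonal ![1, g, 1] ⊗ₖ Matrix.diagonal ![1, g, 1]) *
        (H12 p q t1 t2 t3 s1 s2 s3 tp sp
            ![![0, V / 2, V + Y / 2],
              ![V / 2, V, (3 * V + Y) / 2],
              ![V + Y / 2, (3 * V + Y) / 2, 2 * V + Y]] -
          (V / 2) • (Matrix.diagonal ![0, 1, 2] ⊗ₖ (1 : Matrix (Fin 3) (Fin 3) ℂ) +
            (1 : Matrix (Fin 3) (Fin 3) ℂ) ⊗ₖ Matrix.diagonal ![0, 1, 2])) *
        (Matrix.diagonal ![1, g, 1] ⊗ₖ Matrix.diagonal ![1, g, 1])⁻¹)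
      = τp • (E 0 1 ⊗ₖ E 1 0) + (τp * θ) • (E 1 0 ⊗ₖ E 0 1) +
        (δ / 2) • (E 0 0 ⊗ₖ E 2 2) + τp • (E 0 1 ⊗ₖ E 2 1) +
        (τp ^ 2) • (E 0 2 ⊗ₖ E 2 0) +
        (τp * τ3 * θ) • (E 1 0 ⊗ₖ E 1 2) + (τp * τ3) • (E 1 2 ⊗ₖ E 1 0) +
        (δ / 2) • (E 1 1 ⊗ₖ E 2 2) + (τp * τ3) • (E 1 2 ⊗ₖ E 2 1) +
        (θ * (τ3 ^ 2 - τ3 + 1)) • (E 2 0 ⊗ₖ E 0 2) + (τp * θ) • (E 2 1 ⊗ₖ E 0 1) +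
        (δ / 2) • (E 2 2 ⊗ₖ E 0 0) + (τp * τ3 * θ) • (E 2 1 ⊗ₖ E 1 2) +
        (δ / 2) • (E 2 2 ⊗ₖ E 1 1) + δ • (E 2 2 ⊗ₖ E 2 2) :=
  statement18_general p q tp t2 t3 V g hp htp hg hg2 t1 s1 s2 s3 sp Y τp θ τ3 δ N0 ht1 hs1 hs2 hs3
    hsp hY hτp hθ hτ3 hδ hN0
end
end

section
/- Let p, tp, t2 be nonzero complex numbers, V an arbitrary complex number, and let g be a nonzero complex number with g² = t2/p. Consider the 14V2 two-site Hamiltonian H12 with the symmetric diagonal gauge: v00 = 0, v01 = v10 = V/2, v02 = v20 = V + Y/2, v11 = V, v12 = (3V + Y)/2, v21 = (3V − Y)/2, v22 = 2V, where Y = p²/tp. Set G = diag(1, g, 1), N0 = tp/p², sz = diag(0,1,2), τp = tp/p. Then the reduced Hamiltonian N0·(G⊗G)·( H12 − (V/2)·(sz⊗I3 + I3⊗sz) )·(G⊗G)^{-1} equals the 9×9 matrix (rows and columns indexed by the ordered basis |00⟩,|01⟩,|02⟩,|10⟩,|11⟩,|12⟩,|20⟩,|21⟩,|22⟩) whose only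 nonzero entries are: (|01⟩,|10⟩) = τp; (|02⟩,|02⟩) = 1/2; (|02⟩,|11⟩) = τp; (|02⟩,|20⟩) = τp²; (|12⟩,|12⟩) = 1/2; (|12⟩,|21⟩) = −τp; (|20⟩,|11⟩) = τp^{-1}; (|20⟩,|20⟩) = 1/2; (|21⟩,|21⟩) = −1/2. -/
/-!
In the basis of matrix units `single x y 1` of `ℂ³ ⊗ ℂ³`, conjugation by the gauge
`diagonal ![1, g, 1] ⊗ₖ diagonal ![1, g, 1]` multiplies the unit `single x y 1` by
`g ^ (n₁ x - n₁ y)`, where `n₁` counts the sites in state `1`. Diagonal terms are untouched, and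
once `t2 = p g²` every hopping loses its `g`. The diagonal couplings are `V (i + j) / 2` plus
`Y / 2` times a `±1`-pattern, so subtracting the magnetization term removes `V` entirely, and the
normalization `N0` turns `Y / 2` into `1 / 2` and the hoppings into powers of `τp`.
-/

open Matrix Kronecker

noncomputable section

namespace Matrix

variable {n : Type*} [Fintype n] [DecidableEq n]

theorem diagonal_mul_single_mul_diagonal {α : Type*} [NonUnitalNonAssocSemiring α]
    (d e : n → α) (i j : n) (c : α) :
    diagonal d * single i j c * diagonal e = single i j (d i * c * e j) := by
  ext k l
  simp only [diagonal_mul, mul_diagonal, single_apply]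
  split_ifs <;> simp_all

theorem diagonal_eq_sum_smul_single {α : Type*} [Semiring α] (f : n → α) :
    diagonal f = ∑ i, f i • single i i (1 : α) := by
  simp [smul_single, ← sum_single_eq_diagonal]

theorem diagonal_kronecker_one_add_one_kronecker_diagonal {α : Type*} [Semiring α] (s : n → α) :
    diagonal s ⊗ₖ (1 : Matrix n n α) + (1 : Matrix n n α) ⊗ₖ diagonal s
      = ∑ x : n × n, (s x.1 + s x.2) • single x x 1 := by
  rw [← diagonal_one, diagonal_kronecker_diagonal, diagonal_kronecker_diagonal, diagonal_add,
    diagonal_eq_sum_smul_single]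
  simp only [mul_one, one_mul]

variable {K : Type*} [Field K]

theorem inv_diagonal_of_ne_zero {d : n → K} (hd : ∀ i, d i ≠ 0) :
    (diagonal d)⁻¹ = diagonal fun i => (d i)⁻¹ :=
  inv_eq_right_inv <| by simp [diagonal_mul_diagonal, hd]

theorem diagonal_kronecker_diagonal_conj_single {w : n → K} (hw : ∀ i, w i ≠ 0) (x y : n × n) :
    (diagonal w ⊗ₖ diagonal w) * single x y 1 * (diagonal w ⊗ₖ diagonal w)⁻¹
      = (w x.1 * w x.2 / (w y.1 * w y.2)) • single x y 1 := by
  rw [diagonal_kronecker_diagonal, inv_diagonal_of_ne_zero fun i => mul_ne_zero (hw _) (hw _),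
    diagonal_mul_single_mul_diagonal, smul_single, smul_eq_mul]
  simp only [mul_one, div_eq_mul_inv]

end Matrix

theorem E_kronecker_E (a b c d : Fin 3) : E a b ⊗ₖ E c d = single (a, c) (b, d) 1 := by
  rw [E, E, single_kronecker_single, mul_one]

theorem H12_eq_sum_single (p q t1 t2 t3 s1 s2 s3 tp sp : ℂ) (v : Fin 3 → Fin 3 → ℂ) :
    H12 p q t1 t2 t3 s1 s2 s3 tp sp v = p • single (0, 1) (1, 0) 1 + q • single (1, 0) (0, 1) 1 +
      t1 • single (2, 0) (1, 1) 1 + s1 • single (1, 1) (2, 0) 1 + t2 • single (0, 2) (1, 1) 1 +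
      s2 • single (1, 1) (0, 2) 1 + t3 • single (1, 2) (2, 1) 1 + s3 • single (2, 1) (1, 2) 1 +
      tp • single (0, 2) (2, 0) 1 + sp • single (2, 0) (0, 2) 1 +
      ∑ x : Fin 3 × Fin 3, v x.1 x.2 • single x x 1 := by
  simp only [H12, E_kronecker_E, Fintype.sum_prod_type]

theorem statement19_general (p tp t2 : ℂ) (V g : ℂ)
    (hp : p ≠ 0) (htp : tp ≠ 0)
    (hg : g ≠ 0) (hg2 : g ^ 2 = t2 / p)
    (t1 t3 Y τp N0 : ℂ)
    (ht1 : t1 = p ^ 2 * t2 / tp ^ 2) (ht3 : t3 = -p)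
    (hY : Y = p ^ 2 / tp) (hτp : τp = tp / p) (hN0 : N0 = tp / p ^ 2) :
    N0 • ((Matrix.diagonal ![1, g, 1] ⊗ₖ Matrix.diagonal ![1, g, 1]) *
        (H12 p 0 t1 t2 t3 0 0 0 tp 0
            ![![0, V / 2, V + Y / 2],
              ![V / 2, V, (3 * V + Y) / 2],
              ![V + Y / 2, (3 * V - Y) / 2, 2 * V]] -
          (V / 2) • (Matrix.diagonal ![0, 1, 2] ⊗ₖ (1 : Matrix (Fin 3) (Fin 3) ℂ) +
            (1 : Matrix (Fin 3) (Fin 3) ℂ) ⊗ₖ Matrix.diagonal ![0, 1, 2])) *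
        (Matrix.diagonal ![1, g, 1] ⊗ₖ Matrix.diagonal ![1, g, 1])⁻¹)
      = τp • (E 0 1 ⊗ₖ E 1 0) + (1 / 2 : ℂ) • (E 0 0 ⊗ₖ E 2 2) +
        τp • (E 0 1 ⊗ₖ E 2 1) + (τp ^ 2) • (E 0 2 ⊗ₖ E 2 0) +
        (1 / 2 : ℂ) • (E 1 1 ⊗ₖ E 2 2) + (-τp) • (E 1 2 ⊗ₖ E 2 1) +
        τp⁻¹ • (E 2 1 ⊗ₖ E 0 1) + (1 / 2 : ℂ) • (E 2 2 ⊗ₖ E 0 0) +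
        (-(1 / 2) : ℂ) • (E 2 2 ⊗ₖ E 1 1) := by
  have hw : ∀ i, (![1, g, 1] : Fin 3 → ℂ) i ≠ 0 := by
    simp [Fin.forall_fin_succ, hg]
  obtain rfl : t2 = p * g ^ 2 := by rw [hg2]; field_simp
  subst ht1 ht3 hY hτp hN0
  rw [H12_eq_sum_single, diagonal_kronecker_one_add_one_kronecker_diagonal]
  simp only [Fintype.sum_prod_type, Fin.sum_univ_three, Matrix.mul_add, Matrix.add_mul,
    Matrix.mul_sub, Matrix.sub_mul, Matrix.mul_smul, Matrix.smul_mul,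
    diagonal_kronecker_diagonal_conj_single hw, E_kronecker_E, zero_smul, add_zero, smul_add,
    smul_sub, smul_smul]
  match_scalars <;> simp only [cons_val_zero, cons_val_one, cons_val_two, head_cons, tail_cons] <;>
    field_simp <;> ring

/-- The reduced Hamiltonian of the 14V2 model in the symmetric diagonal gauge. -/
theorem statement19 (p tp t2 : ℂ) (V g : ℂ)
    (hp : p ≠ 0) (htp : tp ≠ 0) (ht2 : t2 ≠ 0)
    (hg : g ≠ 0) (hg2 : g ^ 2 = t2 / p)
    (t1 t3 Y τp N0 : ℂ)
    (ht1 : t1 = p ^ 2 * t2 / tp ^ 2) (ht3 : t3 = -p)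
    (hY : Y = p ^ 2 / tp) (hτp : τp = tp / p) (hN0 : N0 = tp / p ^ 2) :
    N0 • ((Matrix.diagonal ![1, g, 1] ⊗ₖ Matrix.diagonal ![1, g, 1]) *
        (H12 p 0 t1 t2 t3 0 0 0 tp 0
            ![![0, V / 2, V + Y / 2],
              ![V / 2, V, (3 * V + Y) / 2],
              ![V + Y / 2, (3 * V - Y) / 2, 2 * V]] -
          (V / 2) • (Matrix.diagonal ![0, 1, 2] ⊗ₖ (1 : Matrix (Fin 3) (Fin 3) ℂ) +
            (1 : Matrix (Fin 3) (Fin 3) ℂ) ⊗ₖ Matrix.diagonal ![0, 1, 2])) *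
        (Matrix.diagonal ![1, g, 1] ⊗ₖ Matrix.diagonal ![1, g, 1])⁻¹)
      = τp • (E 0 1 ⊗ₖ E 1 0) + (1 / 2 : ℂ) • (E 0 0 ⊗ₖ E 2 2) +
        τp • (E 0 1 ⊗ₖ E 2 1) + (τp ^ 2) • (E 0 2 ⊗ₖ E 2 0) +
        (1 / 2 : ℂ) • (E 1 1 ⊗ₖ E 2 2) + (-τp) • (E 1 2 ⊗ₖ E 2 1) +
        τp⁻¹ • (E 2 1 ⊗ₖ E 0 1) + (1 / 2 : ℂ) • (E 2 2 ⊗ₖ E 0 0) +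
        (-(1 / 2) : ℂ) • (E 2 2 ⊗ₖ E 1 1) :=
  statement19_general p tp t2 V g hp htp hg hg2 t1 t3 Y τp N0 ht1 ht3 hY hτp hN0
end
end
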